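/- arXiv:2107.05699 — 8 statements merged into one kernel-verified Lean document; each statement's English description precedes it below -/
import Mathlib

section
/- Let s ≥ 2 be an integer and let I, J ∈ [n]^s be two strictly increasing vectors of indices such that I_i ≠ J_i for all 1 ≤ i ≤ s. Then there exist two distinct indices i ≠ j in [s] such that the value I_i does not appear among the coordinates of J, and the value J_j does not appear among the coordinates of I. -/
/-!
Suppose `J ⊤ < I ⊤` (otherwise swap `I` and `J`); then `I ⊤` exceeds every value of `J`. If
also `J ⊥ < I ⊥`, then `J ⊥` is below every value of `I` and `(⊤, ⊥)` works. Otherwise `I ⊥` is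
below every value of `J`; and since the strictly monotone `I ≠ J` have ranges of equal size, some
`J j` is not a value of `I`: pair it with `⊤`, or with `⊥` if `j = ⊤`.
-/

open Set

section Preorder

variable {ι α : Type*} [LinearOrder ι] [Preorder α] {f : ι → α} {x : α}

lemma Monotone.notMem_range_of_apply_top_lt [OrderTop ι] (hf : Monotone f) (h : f ⊤ < x) :
    x ∉ range f := by
  rintro ⟨i, rfl⟩
  exact (hf le_top).not_gt h

lemma Monotone.notMem_range_of_lt_apply_bot [OrderBot ι] (hf : Monotone f) (h : x < f ⊥) :
    x ∉ range f := by
  rintro ⟨i, rfl⟩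
  exact (hf bot_le).not_gt h

lemma StrictMono.exists_apply_notMem_range [Finite ι] {I J : ι → α} (hI : StrictMono I)
    (hJ : StrictMono J) (hIJ : I ≠ J) : ∃ j, J j ∉ range I := by
  by_contra! hsub
  have hrange : range J = range I :=
    (finite_range I).eq_of_subset_of_card_le (range_subset_iff.2 hsub) <| by
      rw [Nat.card_range_of_injective hI.injective, Nat.card_range_of_injective hJ.injective]
  exact hIJ ((hJ.range_inj hI).1 hrange).symm

end Preorder

section LinearOrder

variable {ι α : Type*} [LinearOrder ι] [Finite ι] [BoundedOrder ι] [Nontrivial ι]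
  [LinearOrder α] {I J : ι → α}

lemma StrictMono.exists_unshared_of_apply_top_lt (hI : StrictMono I) (hJ : StrictMono J)
    (hne : ∀ i, I i ≠ J i) (htop : J ⊤ < I ⊤) :
    ∃ i j, i ≠ j ∧ I i ∉ range J ∧ J j ∉ range I := by
  have hItop : I ⊤ ∉ range J := hJ.monotone.notMem_range_of_apply_top_lt htop
  rcases (hne ⊥).lt_or_gt with hbot | hbot
  · obtain ⟨j, hj⟩ := hI.exists_apply_notMem_range hJ fun h => hne ⊥ (congrFun h ⊥)
    obtain rfl | hj_top := eq_or_ne j ⊤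
    · exact ⟨⊥, ⊤, bot_ne_top, hJ.monotone.notMem_range_of_lt_apply_bot hbot, hj⟩
    · exact ⟨⊤, j, hj_top.symm, hItop, hj⟩
  · exact ⟨⊤, ⊥, top_ne_bot, hItop, hI.monotone.notMem_range_of_lt_apply_bot hbot⟩

lemma StrictMono.exists_unshared (hI : StrictMono I) (hJ : StrictMono J)
    (hne : ∀ i, I i ≠ J i) : ∃ i j, i ≠ j ∧ I i ∉ range J ∧ J j ∉ range I := by
  rcases (hne ⊤).lt_or_gt with htop | htop
  · obtain ⟨i, j, hij, hi, hj⟩ :=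
      hJ.exists_unshared_of_apply_top_lt hI (fun i => (hne i).symm) htop
    exact ⟨j, i, hij.symm, hj, hi⟩
  · exact hI.exists_unshared_of_apply_top_lt hJ hne htop

end LinearOrder

/-- If `I, J` are two strictly increasing vectors of length `s ≥ 2` with `I_i ≠ J_i`
for every coordinate `i`, then there are two distinct indices `i ≠ j` such that the
value `I i` does not appear among the coordinates of `J`, and the value `J j` does
not appear among the coordinates of `I`. -/
theorem exists_unshared_coords {n s : ℕ} (hs : 2 ≤ s)
    (I J : Fin s → Fin n) (hI : StrictMono I) (hJ : StrictMono J)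
    (hne : ∀ i, I i ≠ J i) :
    ∃ i j : Fin s, i ≠ j ∧ (∀ l, J l ≠ I i) ∧ (∀ l, I l ≠ J j) := by
  obtain ⟨m, rfl⟩ : ∃ m, s = m + 2 := ⟨s - 2, by omega⟩
  simpa only [mem_range, not_exists] using hI.exists_unshared hJ hne
end

section
/- Let I, J ∈ [n]^{2k-1} be two strictly increasing vectors that agree on at most k-1 coordinates (i.e., |{i : I_i = J_i}| ≤ k-1). Then the determinant of the (2k-1)×(2k-1) matrix V_{I,J}(X) over the polynomial ring Z[X_1,...,X_n], whose ℓ-th row is (1, X_{I_ℓ}, ..., X_{I_ℓ}^{k-1}, X_{J_ℓ}, ..., X_{J_ℓ}^{k-1}), is a nonzero polynomial. -/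
/-- The `(2k-1) × (2k-1)` matrix whose `ℓ`-th row is
`(1, x_ℓ, …, x_ℓ^{k-1}, y_ℓ, …, y_ℓ^{k-1})`. -/
def vandIJ {R : Type*} [CommRing R] (k : ℕ) (x y : Fin (2 * k - 1) → R) :
    Matrix (Fin (2 * k - 1)) (Fin (2 * k - 1)) R :=
  fun ℓ c =>
    if (c : ℕ) = 0 then 1
    else if (c : ℕ) ≤ k - 1 then x ℓ ^ (c : ℕ)
    else y ℓ ^ ((c : ℕ) - (k - 1))

/-- The matrix `V_{I,J}(X)` over `ℤ[X_1,…,X_n]`. -/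
noncomputable def VIJ (n k : ℕ) (I J : Fin (2 * k - 1) → Fin n) :
    Matrix (Fin (2 * k - 1)) (Fin (2 * k - 1)) (MvPolynomial (Fin n) ℤ) :=
  vandIJ k (fun ℓ => MvPolynomial.X (I ℓ)) (fun ℓ => MvPolynomial.X (J ℓ))


open MvPolynomial Polynomial Finset Matrix

namespace DetAux

variable {n : ℕ}

/-- `ℤ[X_1,…,X_n]`. -/
local notation "R" => MvPolynomial (Fin n) ℤ

/-- Ring hom `ℤ[X] → (ℤ[X])[Y]` sending `X V` to `Y` and all other variables to themselves. -/
noncomputable def lift (V : Fin n) : MvPolynomial (Fin n) ℤ →+* Polynomial (MvPolynomial (Fin n) ℤ) :=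
  MvPolynomial.eval₂Hom (Polynomial.C.comp MvPolynomial.C)
    (fun i => if i = V then Polynomial.X else Polynomial.C (MvPolynomial.X i))

@[simp] lemma lift_X_self (V : Fin n) : lift V (MvPolynomial.X V) = Polynomial.X := by
  simp [lift]

lemma lift_X_of_ne {V i : Fin n} (h : i ≠ V) :
    lift V (MvPolynomial.X i) = Polynomial.C (MvPolynomial.X i) := by
  simp [lift, h]

lemma lift_X_pow_of_ne {V i : Fin n} (h : i ≠ V) (e : ℕ) :
    lift V (MvPolynomial.X i ^ e) = Polynomial.C (MvPolynomial.X i ^ e) := by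
  rw [map_pow, lift_X_of_ne h, ← map_pow]

lemma lift_X_pow_self (V : Fin n) (e : ℕ) :
    lift V (MvPolynomial.X V ^ e) = Polynomial.X ^ e := by
  rw [map_pow, lift_X_self]

lemma lift_one (V : Fin n) : lift V (1 : R) = Polynomial.C 1 := by simp

/-- Generic leading-coefficient extraction: if all rows but the last map to constants
under `φ`, and in the last row only the `j`-th entry has a (unit) coefficient in degree `D`,
then nonvanishing of the minor forces nonvanishing of the determinant. -/
lemma det_ne_zero_of_minor {S : Type*} [CommRing S] [IsDomain S] {m : ℕ}
    (M : Matrix (Fin (m + 1)) (Fin (m + 1)) S)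
    (φ : S →+* Polynomial S) (D : ℕ) (j : Fin (m + 1)) (ε : S)
    (hrow : ∀ (ℓ : Fin m) (c : Fin (m + 1)),
      φ (M ℓ.castSucc c) = Polynomial.C (M ℓ.castSucc c))
    (hD : ∀ c : Fin (m + 1), c ≠ j → (φ (M (Fin.last m) c)).coeff D = 0)
    (hj : (φ (M (Fin.last m) j)).coeff D = ε) (hε : ε ≠ 0)
    (hminor : (M.submatrix Fin.castSucc j.succAbove).det ≠ 0) :
    M.det ≠ 0 := by
  intro h0
  have hmap : (M.map φ).det = 0 := by
    have := (RingHom.map_det φ M).symm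
    rw [RingHom.mapMatrix_apply] at this
    rw [this, h0, map_zero]
  have hexp := Matrix.det_succ_row (M.map φ) (Fin.last m)
  rw [hmap] at hexp
  -- compute the minors as constants
  have hmin : ∀ c : Fin (m + 1),
      ((M.map φ).submatrix (Fin.last m).succAbove c.succAbove).det
        = Polynomial.C ((M.submatrix Fin.castSucc c.succAbove).det) := by
    intro c
    have h1 : (M.map φ).submatrix (Fin.last m).succAbove c.succAbove
        = (M.submatrix Fin.castSucc c.succAbove).map Polynomial.C := by
      apply Matrix.ext
      intro i j'
      show φ (M ((Fin.last m).succAbove i) (c.succAbove j')) = _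
      rw [Fin.succAbove_last]
      exact hrow i (c.succAbove j')
    rw [h1]
    have := (RingHom.map_det (Polynomial.C : S →+* Polynomial S)
      (M.submatrix Fin.castSucc c.succAbove)).symm
    rw [RingHom.mapMatrix_apply] at this
    exact this
  -- take coefficient D
  have hco := congrArg (fun p => Polynomial.coeff p D) hexp
  simp only [Polynomial.coeff_zero, Polynomial.finset_sum_coeff] at hco
  rw [Finset.sum_eq_single j] at hco
  · rw [hmin j] at hco
    have : (-1 : Polynomial S) ^ ((Fin.last m : ℕ) + (j : ℕ)) = Polynomial.C ((-1) ^ ((Fin.last m : ℕ) + (j : ℕ))) := by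
      simp
    rw [this] at hco
    have hMj : (M.map φ) (Fin.last m) j = φ (M (Fin.last m) j) := rfl
    rw [hMj] at hco
    rw [mul_assoc, mul_comm (φ (M (Fin.last m) j)), ← mul_assoc,
      ← _root_.map_mul Polynomial.C] at hco
    rw [Polynomial.coeff_C_mul, hj] at hco
    have : ((-1) ^ ((Fin.last m : ℕ) + (j : ℕ)) * (M.submatrix Fin.castSucc j.succAbove).det : S) ≠ 0 := by
      apply mul_ne_zero _ hminor
      simp [pow_ne_zero]
    exact this (by
      rcases mul_eq_zero.mp hco.symm with h | h
      · exact absurd h (by assumption)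
      · exact absurd h hε) |>.elim
  · intro c _ hc
    rw [hmin c]
    have hMc : (M.map φ) (Fin.last m) c = φ (M (Fin.last m) c) := rfl
    rw [hMc]
    have : (-1 : Polynomial S) ^ ((Fin.last m : ℕ) + (c : ℕ)) = Polynomial.C ((-1) ^ ((Fin.last m : ℕ) + (c : ℕ))) := by simp
    rw [this, mul_assoc, mul_comm (φ (M (Fin.last m) c)), ← mul_assoc,
      ← _root_.map_mul Polynomial.C]
    rw [Polynomial.coeff_C_mul, hD c hc, mul_zero]
  · intro hj'
    exact absurd (Finset.mem_univ j) hj'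

/-- The difference matrix `(y_ℓ^{j+1} - x_ℓ^{j+1})`. -/
def Dmat {S : Type*} [CommRing S] {b : ℕ} (x y : Fin b → S) : Matrix (Fin b) (Fin b) S :=
  fun ℓ j => y ℓ ^ ((j : ℕ) + 1) - x ℓ ^ ((j : ℕ) + 1)

lemma Dmat_det_ne_zero : ∀ (b : ℕ) (u v : Fin b → Fin n),
    StrictMono u → StrictMono v → (∀ ℓ, u ℓ ≠ v ℓ) →
    (Dmat (fun ℓ => MvPolynomial.X (u ℓ)) (fun ℓ => MvPolynomial.X (v ℓ)) :
      Matrix (Fin b) (Fin b) R).det ≠ 0 := by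
  intro b
  induction b with
  | zero =>
      intro u v _ _ _
      rw [Matrix.det_fin_zero]
      exact one_ne_zero
  | succ m ih =>
      intro u v hu hv hne
      have hlt : ∀ ℓ : Fin m, u ℓ.castSucc < u (Fin.last m) ∧ v ℓ.castSucc < v (Fin.last m) :=
        fun ℓ => ⟨hu (Fin.castSucc_lt_last ℓ), hv (Fin.castSucc_lt_last ℓ)⟩
      -- the minor is the smaller difference matrix
      have hminor :
          ((Dmat (fun ℓ => MvPolynomial.X (u ℓ)) (fun ℓ => MvPolynomial.X (v ℓ)) :
            Matrix (Fin (m+1)) (Fin (m+1)) R).submatrix Fin.castSucc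
              (Fin.last m).succAbove).det ≠ 0 := by
        have : ((Dmat (fun ℓ => MvPolynomial.X (u ℓ)) (fun ℓ => MvPolynomial.X (v ℓ)) :
            Matrix (Fin (m+1)) (Fin (m+1)) R).submatrix Fin.castSucc (Fin.last m).succAbove)
            = Dmat (fun ℓ => MvPolynomial.X (u ℓ.castSucc)) (fun ℓ => MvPolynomial.X (v ℓ.castSucc)) := by
          apply Matrix.ext
          intro i j
          simp [Dmat, Matrix.submatrix, Fin.succAbove_last]
        rw [this]
        exact ih (u ∘ Fin.castSucc) (v ∘ Fin.castSucc)
          (hu.comp Fin.strictMono_castSucc) (hv.comp Fin.strictMono_castSucc)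
          (fun ℓ => hne ℓ.castSucc)
      rcases lt_or_gt_of_ne (hne (Fin.last m)) with hcase | hcase
      · -- v (last) is the top variable, ε = 1
        apply det_ne_zero_of_minor _ (lift (v (Fin.last m))) (m + 1) (Fin.last m) 1 _ _ _
          one_ne_zero hminor
        · intro ℓ c
          have h1 : u ℓ.castSucc ≠ v (Fin.last m) := ne_of_lt (lt_trans (hlt ℓ).1 hcase)
          have h2 : v ℓ.castSucc ≠ v (Fin.last m) := ne_of_lt (hlt ℓ).2
          show lift _ (MvPolynomial.X (v ℓ.castSucc) ^ ((c:ℕ)+1) - MvPolynomial.X (u ℓ.castSucc) ^ ((c:ℕ)+1)) = _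
          rw [map_sub, lift_X_pow_of_ne h2, lift_X_pow_of_ne h1, ← map_sub]
          rfl
        · intro c hc
          have h1 : u (Fin.last m) ≠ v (Fin.last m) := hne _
          show (lift _ (MvPolynomial.X (v (Fin.last m)) ^ ((c:ℕ)+1)
            - MvPolynomial.X (u (Fin.last m)) ^ ((c:ℕ)+1))).coeff (m+1) = 0
          rw [map_sub, lift_X_pow_of_ne h1, lift_X_pow_self]
          have hcm : (c : ℕ) + 1 ≠ m + 1 := by
            have : (c : ℕ) < m + 1 := c.isLt
            have : (c : ℕ) ≠ m := fun h => hc (Fin.ext (by simp [h, Fin.last]))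
            omega
          rw [Polynomial.coeff_sub, Polynomial.coeff_X_pow, if_neg (by omega : ¬ (m + 1 = (c:ℕ) + 1)),
            Polynomial.coeff_C]
          simp
        · have h1 : u (Fin.last m) ≠ v (Fin.last m) := hne _
          show (lift _ (MvPolynomial.X (v (Fin.last m)) ^ ((Fin.last m : ℕ)+1)
            - MvPolynomial.X (u (Fin.last m)) ^ ((Fin.last m : ℕ)+1))).coeff (m+1) = 1
          rw [map_sub, lift_X_pow_self, lift_X_pow_of_ne h1]
          rw [Polynomial.coeff_sub, Polynomial.coeff_X_pow, Polynomial.coeff_C]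
          simp [Fin.last]
      · -- u (last) is the top variable, ε = -1
        apply det_ne_zero_of_minor _ (lift (u (Fin.last m))) (m + 1) (Fin.last m) (-1) _ _ _
          (neg_ne_zero.mpr one_ne_zero) hminor
        · intro ℓ c
          have h1 : u ℓ.castSucc ≠ u (Fin.last m) := ne_of_lt (hlt ℓ).1
          have h2 : v ℓ.castSucc ≠ u (Fin.last m) := ne_of_lt (lt_trans (hlt ℓ).2 hcase)
          show lift _ (MvPolynomial.X (v ℓ.castSucc) ^ ((c:ℕ)+1) - MvPolynomial.X (u ℓ.castSucc) ^ ((c:ℕ)+1)) = _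
          rw [map_sub, lift_X_pow_of_ne h2, lift_X_pow_of_ne h1, ← map_sub]
          rfl
        · intro c hc
          have h1 : v (Fin.last m) ≠ u (Fin.last m) := (hne _).symm
          show (lift _ (MvPolynomial.X (v (Fin.last m)) ^ ((c:ℕ)+1)
            - MvPolynomial.X (u (Fin.last m)) ^ ((c:ℕ)+1))).coeff (m+1) = 0
          rw [map_sub, lift_X_pow_of_ne h1, lift_X_pow_self]
          have hcm : (c : ℕ) + 1 ≠ m + 1 := by
            have : (c : ℕ) < m + 1 := c.isLt
            have : (c : ℕ) ≠ m := fun h => hc (Fin.ext (by simp [h, Fin.last]))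
            omega
          rw [Polynomial.coeff_sub, Polynomial.coeff_X_pow, if_neg (by omega : ¬ (m + 1 = (c:ℕ) + 1)),
            Polynomial.coeff_C]
          simp
        · have h1 : v (Fin.last m) ≠ u (Fin.last m) := (hne _).symm
          show (lift _ (MvPolynomial.X (v (Fin.last m)) ^ ((Fin.last m : ℕ)+1)
            - MvPolynomial.X (u (Fin.last m)) ^ ((Fin.last m : ℕ)+1))).coeff (m+1) = -1
          rw [map_sub, lift_X_pow_of_ne h1, lift_X_pow_self]
          rw [Polynomial.coeff_sub, Polynomial.coeff_X_pow, Polynomial.coeff_C]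
          simp [Fin.last]
/-- Columns `1, x^1, …, x^a, y^{c-a}` (generalized `vandIJ`). -/
def Vmat {S : Type*} [CommRing S] (a : ℕ) {N : ℕ} (x y : Fin N → S) :
    Matrix (Fin N) (Fin N) S :=
  fun ℓ c =>
    if (c : ℕ) = 0 then 1
    else if (c : ℕ) ≤ a then x ℓ ^ (c : ℕ)
    else y ℓ ^ ((c : ℕ) - a)

/-- Columns `1, x^1, …, x^a, y^{c-a} - x^{c-a}`. -/
def Fmat {S : Type*} [CommRing S] (a : ℕ) {N : ℕ} (x y : Fin N → S) :
    Matrix (Fin N) (Fin N) S :=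
  fun ℓ c =>
    if (c : ℕ) = 0 then 1
    else if (c : ℕ) ≤ a then x ℓ ^ (c : ℕ)
    else y ℓ ^ ((c : ℕ) - a) - x ℓ ^ ((c : ℕ) - a)

lemma Fmat_eq_vandermonde {S : Type*} [CommRing S] {a N : ℕ} (x y : Fin N → S)
    (h : N ≤ a + 1) : Fmat a x y = Matrix.vandermonde x := by
  apply Matrix.ext
  intro ℓ c
  have hc : (c : ℕ) ≤ a := by have := c.isLt; omega
  rcases Nat.eq_zero_or_pos (c : ℕ) with h0 | h0
  · simp [Fmat, Matrix.vandermonde, h0]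
  · simp [Fmat, Matrix.vandermonde, Nat.pos_iff_ne_zero.mp h0, hc]

/-- Column operations: subtracting the `x`-columns from the difference columns. -/
lemma Fmat_det_eq_Vmat_det {S : Type*} [CommRing S] {a N : ℕ} (x y : Fin N → S)
    (hba : ∀ c : Fin N, (c : ℕ) ≤ a + a) :
    (Fmat a x y).det = (Vmat a x y).det := by
  classical
  set E : Matrix (Fin N) (Fin N) S := fun d c =>
    if d = c then 1 else if (a < (c : ℕ) ∧ (d : ℕ) = (c : ℕ) - a) then -1 else 0 with hE
  have hFE : Fmat a x y = Vmat a x y * E := by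
    apply Matrix.ext; intro ℓ c
    rw [Matrix.mul_apply]
    by_cases hc : a < (c : ℕ)
    · have hc0 : (c : ℕ) - a < N := lt_of_le_of_lt (Nat.sub_le _ _) c.isLt
      set d₀ : Fin N := ⟨(c : ℕ) - a, hc0⟩ with hd₀
      have hd0a : (d₀ : ℕ) ≤ a := by simp [hd₀]; have := hba c; omega
      have hd0pos : 0 < (d₀ : ℕ) := by simp [hd₀]; omega
      have hd₀c : d₀ ≠ c := by
        intro h; apply absurd (congrArg (fun t : Fin N => (t : ℕ)) h); simp [hd₀]; omega
      have hsummand : ∀ d : Fin N, Vmat a x y ℓ d * E d c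
          = (if d = c then Vmat a x y ℓ d else 0) + (if d = d₀ then -(Vmat a x y ℓ d) else 0) := by
        intro d
        by_cases h1 : d = c
        · subst h1
          rw [if_pos rfl, if_neg (by rw [← hd₀] at *; exact fun h => hd₀c h.symm)]
          simp [hE]
        · by_cases h2 : d = d₀
          · subst h2
            rw [if_neg h1, if_pos rfl]
            have : E d₀ c = -1 := by
              simp only [hE]
              rw [if_neg h1, if_pos ⟨hc, by simp [hd₀]⟩]
            rw [this]; ring
          · have : E d c = 0 := by
              simp only [hE]
              rw [if_neg h1, if_neg]
              rintro ⟨-, h3⟩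
              exact h2 (Fin.ext (by simp [hd₀, h3]))
            rw [this, if_neg h1, if_neg h2]; ring
      rw [Finset.sum_congr rfl (fun d _ => hsummand d), Finset.sum_add_distrib,
        Finset.sum_ite_eq' Finset.univ c, Finset.sum_ite_eq' Finset.univ d₀]
      simp only [Finset.mem_univ, if_pos]
      have hv1 : Vmat a x y ℓ c = y ℓ ^ ((c : ℕ) - a) := by
        simp [Vmat, Nat.pos_iff_ne_zero.mp (by omega : 0 < (c:ℕ)), not_le.mpr hc]
      have hv2 : Vmat a x y ℓ d₀ = x ℓ ^ ((c : ℕ) - a) := by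
        simp only [Vmat, if_neg (by omega : ¬ (d₀ : ℕ) = 0), if_pos hd0a]
        rfl
      have hf : Fmat a x y ℓ c = y ℓ ^ ((c : ℕ) - a) - x ℓ ^ ((c : ℕ) - a) := by
        simp [Fmat, Nat.pos_iff_ne_zero.mp (by omega : 0 < (c:ℕ)), not_le.mpr hc]
      rw [hv1, hv2, hf]; ring
    · have hsummand : ∀ d : Fin N, Vmat a x y ℓ d * E d c
          = (if d = c then Vmat a x y ℓ d else 0) := by
        intro d
        by_cases h1 : d = c
        · subst h1; simp [hE]
        · have : E d c = 0 := by
            simp only [hE]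
            rw [if_neg h1, if_neg (by rintro ⟨h2, -⟩; exact hc h2)]
          rw [this, if_neg h1]; ring
      rw [Finset.sum_congr rfl (fun d _ => hsummand d), Finset.sum_ite_eq' Finset.univ c]
      simp only [Finset.mem_univ, if_pos]
      by_cases h0 : (c : ℕ) = 0
      · simp [Fmat, Vmat, h0]
      · simp [Fmat, Vmat, h0, not_lt.mp hc]
  have hdetE : E.det = 1 := by
    have htri : E.BlockTriangular id := by
      intro i j hij
      simp only [id] at hij
      simp only [hE]
      rw [if_neg (by intro h; subst h; exact absurd hij (lt_irrefl _)), if_neg]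
      rintro ⟨h1, h2⟩
      have : (j : ℕ) < (i : ℕ) := hij
      omega
    rw [Matrix.det_of_upperTriangular htri]
    have : ∀ i : Fin N, E i i = 1 := fun i => by simp [hE]
    simp [this]
  rw [hFE, Matrix.det_mul, hdetE, mul_one]

/-- Swapping the roles of `x` and `y` in the balanced case changes `det` by a sign only. -/
lemma Vmat_swap_det_ne_zero_iff {S : Type*} [CommRing S] {N a : ℕ} (hN : N = a + a + 1)
    (x y : Fin N → S) :
    (Vmat a x y).det ≠ 0 ↔ (Vmat a y x).det ≠ 0 := by
  classical
  subst hN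
  have key : ∀ (x y : Fin (a + a + 1) → S), (Vmat a y x).det = 0 → (Vmat a x y).det = 0 := by
    intro x y h
    set f : Fin (a + a + 1) → Fin (a + a + 1) := fun c =>
      ⟨if (c : ℕ) = 0 then 0 else if (c : ℕ) ≤ a then (c : ℕ) + a else (c : ℕ) - a,
        by have := c.isLt; split_ifs <;> omega⟩ with hf
    have hval : ∀ c : Fin (a+a+1), (f c : ℕ)
        = if (c : ℕ) = 0 then 0 else if (c : ℕ) ≤ a then (c : ℕ) + a else (c : ℕ) - a := by
      intro c; simp [hf]
    have hinv : Function.Involutive f := by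
      intro c
      apply Fin.ext
      rw [hval, hval]
      have hc := c.isLt
      split_ifs <;> omega
    set σ : Equiv.Perm (Fin (a + a + 1)) := hinv.toPerm with hσ
    have hident : Vmat a y x = (Vmat a x y).submatrix id σ := by
      apply Matrix.ext; intro ℓ c
      show Vmat a y x ℓ c = Vmat a x y ℓ (f c)
      have hvfc := hval c
      have hc := c.isLt
      by_cases h0 : (c : ℕ) = 0
      · rw [if_pos h0] at hvfc
        simp [Vmat, h0, hvfc]
      · by_cases h1 : (c : ℕ) ≤ a
        · rw [if_neg h0, if_pos h1] at hvfc
          simp only [Vmat, if_neg h0, if_pos h1]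
          rw [hvfc]
          rw [if_neg (by omega : ¬ ((c:ℕ) + a = 0)),
            if_neg (by omega : ¬ ((c:ℕ) + a ≤ a))]
          congr 1
          omega
        · rw [if_neg h0, if_neg h1] at hvfc
          simp only [Vmat, if_neg h0, if_neg h1]
          rw [hvfc]
          rw [if_neg (by omega : ¬ ((c:ℕ) - a = 0)),
            if_pos (by omega : (c:ℕ) - a ≤ a)]
    rw [hident, Matrix.det_permute' σ] at h
    rcases Int.units_eq_one_or (Equiv.Perm.sign σ) with hs | hs <;> rw [hs] at h
    · simpa using h
    · simpa using h
  constructor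
  · intro h1 h2; exact h1 (key x y h2)
  · intro h1 h2; exact h1 (key y x h2)
/-- The forcing case: if exactly `a+1` rows agree, the determinant factors as a
Vandermonde times a difference-matrix determinant. -/
lemma Fmat_det_ne_zero_of_agree_eq {m a : ℕ} (ha : a ≤ m)
    (I J : Fin (m + 1) → Fin n) (hI : StrictMono I) (hJ : StrictMono J)
    (hg : (Finset.univ.filter fun ℓ => I ℓ = J ℓ).card = a + 1) :
    (Fmat a (fun ℓ => MvPolynomial.X (I ℓ)) (fun ℓ => MvPolynomial.X (J ℓ)) :
      Matrix _ _ R).det ≠ 0 := by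
  classical
  set Sg : Finset (Fin (m + 1)) := Finset.univ.filter fun ℓ => I ℓ = J ℓ with hSg
  have hcompl : Sgᶜ.card = m - a := by
    rw [Finset.card_compl, hg]
    simp
  set eS := Sg.orderEmbOfFin hg with heS
  set eT := Sgᶜ.orderEmbOfFin hcompl with heT
  set M : Matrix (Fin (m+1)) (Fin (m+1)) R :=
    Fmat a (fun ℓ => MvPolynomial.X (I ℓ)) (fun ℓ => MvPolynomial.X (J ℓ)) with hM
  set rowF : Fin (a+1) ⊕ Fin (m-a) → Fin (m+1) := Sum.elim (⇑eS) (⇑eT) with hrowF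
  have hrowBij : Function.Bijective rowF := by
    rw [Fintype.bijective_iff_injective_and_card]
    constructor
    · rintro (p | p) (q | q) h <;> simp only [hrowF, Sum.elim_inl, Sum.elim_inr] at h
      · exact congrArg Sum.inl (eS.injective h)
      · exact absurd (h ▸ Sg.orderEmbOfFin_mem hg p)
          (Finset.mem_compl.mp (Sgᶜ.orderEmbOfFin_mem hcompl q))
      · exact absurd ((h.symm) ▸ Sg.orderEmbOfFin_mem hg q)
          (Finset.mem_compl.mp (Sgᶜ.orderEmbOfFin_mem hcompl p))
      · exact congrArg Sum.inr (eT.injective h)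
    · simp; omega
  set rowE : (Fin (a+1) ⊕ Fin (m-a)) ≃ Fin (m+1) := Equiv.ofBijective rowF hrowBij with hrowE
  set colE : (Fin (a+1) ⊕ Fin (m-a)) ≃ Fin (m+1) :=
    finSumFinEquiv.trans (finCongr (by omega : (a+1) + (m-a) = m+1)) with hcolE
  -- the reindexed matrix
  set M' := M.submatrix rowE colE with hM'
  have hdet' : M.det = 0 → M'.det = 0 := by
    intro h
    have h1 : M' = (M.submatrix colE colE).submatrix (rowE.trans colE.symm) id := by
      apply Matrix.ext; intro i j
      simp [hM', Matrix.submatrix]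
    rw [h1, Matrix.det_permute, Matrix.det_submatrix_equiv_self, h, mul_zero]
  -- block structure
  have hcol1 : ∀ j : Fin (a+1), ((colE (Sum.inl j)) : ℕ) = (j : ℕ) := by
    intro j; simp [hcolE]
  have hcol2 : ∀ t : Fin (m-a), ((colE (Sum.inr t)) : ℕ) = (a+1) + (t : ℕ) := by
    intro t; simp [hcolE]
  have hSmem : ∀ i : Fin (a+1), I (eS i) = J (eS i) := by
    intro i
    have := Sg.orderEmbOfFin_mem hg i
    exact (Finset.mem_filter.mp this).2
  have hTmem : ∀ t : Fin (m-a), I (eT t) ≠ J (eT t) := by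
    intro t
    have h2 := Finset.mem_compl.mp (Sgᶜ.orderEmbOfFin_mem hcompl t)
    intro h
    exact h2 (Finset.mem_filter.mpr ⟨Finset.mem_univ _, h⟩)
  set A : Matrix (Fin (a+1)) (Fin (a+1)) R :=
    Matrix.vandermonde (fun i => MvPolynomial.X (I (eS i))) with hA
  set D : Matrix (Fin (m-a)) (Fin (m-a)) R :=
    Dmat (fun t => MvPolynomial.X (I (eT t))) (fun t => MvPolynomial.X (J (eT t))) with hD
  set Cm : Matrix (Fin (m-a)) (Fin (a+1)) R := fun t j => M' (Sum.inr t) (Sum.inl j) with hCm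
  have hblocks : M' = Matrix.fromBlocks A 0 Cm D := by
    apply Matrix.ext
    rintro (i | t) (j | t')
    · -- top left : Vandermonde
      show M (rowF (Sum.inl i)) (colE (Sum.inl j)) = A i j
      simp only [hrowF, Sum.elim_inl, hM, Fmat, hcol1 j, hA, Matrix.vandermonde_apply]
      rcases Nat.eq_zero_or_pos (j : ℕ) with h0 | h0
      · rw [if_pos h0, h0, pow_zero]
      · rw [if_neg (by omega), if_pos (by have := j.isLt; omega : (j:ℕ) ≤ a)]
    · -- top right : zero
      show M (rowF (Sum.inl i)) (colE (Sum.inr t')) = 0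
      simp only [hrowF, Sum.elim_inl, hM, Fmat, hcol2 t']
      rw [if_neg (by omega), if_neg (by omega), hSmem i, sub_self]

    · -- bottom left
      rfl
    · -- bottom right : difference matrix
      show M (rowF (Sum.inr t)) (colE (Sum.inr t')) = D t t'
      simp only [hrowF, Sum.elim_inr, hM, Fmat, hcol2 t', hD, Dmat]
      rw [if_neg (by omega), if_neg (by omega)]
      congr 2 <;> omega
  have hAdet : A.det ≠ 0 := by
    rw [hA, Matrix.det_vandermonde]
    rw [Finset.prod_ne_zero_iff]
    intro i _
    rw [Finset.prod_ne_zero_iff]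
    intro j hj
    rw [Finset.mem_Ioi] at hj
    apply sub_ne_zero.mpr
    intro h
    have := hI.injective (MvPolynomial.X_injective h)
    exact absurd (eS.injective this) (ne_of_gt hj)
  have hDdet : D.det ≠ 0 := by
    rw [hD]
    exact Dmat_det_ne_zero (m - a) (fun t => I (eT t)) (fun t => J (eT t))
      (hI.comp eT.strictMono) (hJ.comp eT.strictMono) hTmem
  intro h0
  have h1 := hdet' h0
  rw [hblocks, Matrix.det_fromBlocks_zero₁₂] at h1
  exact (mul_ne_zero hAdet hDdet) h1
lemma lift_Fmat_entry_const {V : Fin n} {a N : ℕ} (x y : Fin N → Fin n)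
    (ℓ c : Fin N) (hx : x ℓ ≠ V) (hy : y ℓ ≠ V) :
    lift V ((Fmat a (fun t => MvPolynomial.X (x t)) (fun t => MvPolynomial.X (y t)) :
      Matrix _ _ R) ℓ c)
    = Polynomial.C ((Fmat a (fun t => MvPolynomial.X (x t)) (fun t => MvPolynomial.X (y t)) :
      Matrix _ _ R) ℓ c) := by
  simp only [Fmat]
  split_ifs
  · simp
  · exact lift_X_pow_of_ne hx _
  · rw [map_sub, lift_X_pow_of_ne hy, lift_X_pow_of_ne hx, map_sub]

lemma Fmat_minor_last {S : Type*} [CommRing S] {a m' : ℕ} (x y : Fin (m' + 1 + 1) → S) :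
    (Fmat a x y).submatrix Fin.castSucc (Fin.last (m' + 1)).succAbove
      = Fmat a (x ∘ Fin.castSucc) (y ∘ Fin.castSucc) := by
  rw [Fin.succAbove_last]
  apply Matrix.ext; intro i j
  simp [Fmat, Matrix.submatrix_apply]

lemma coe_succAbove_mid {m' a : ℕ} (hlt : a < m' + 1 + 1) (j : Fin (m' + 1)) :
    (((⟨a, hlt⟩ : Fin (m' + 1 + 1)).succAbove j : Fin (m' + 1 + 1)) : ℕ)
      = if (j : ℕ) < a then (j : ℕ) else (j : ℕ) + 1 := by
  rcases lt_or_ge (j : ℕ) a with h | h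
  · rw [Fin.succAbove_of_castSucc_lt _ _ (by simp [Fin.lt_def]; omega)]
    simp [h]
  · rw [Fin.succAbove_of_le_castSucc _ _ (by simp [Fin.le_def]; omega)]
    rw [Fin.val_succ, if_neg (by omega)]

lemma Fmat_minor_colA {S : Type*} [CommRing S] {a' m' : ℕ} (hlt : a' + 1 < m' + 1 + 1)
    (x y : Fin (m' + 1 + 1) → S) :
    (Fmat (a' + 1) x y).submatrix Fin.castSucc ((⟨a' + 1, hlt⟩ : Fin (m' + 1 + 1)).succAbove)
      = Fmat a' (x ∘ Fin.castSucc) (y ∘ Fin.castSucc) := by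
  apply Matrix.ext; intro i j
  have hcoe := coe_succAbove_mid hlt j
  simp only [Matrix.submatrix_apply, Fmat, hcoe, Function.comp_apply]
  by_cases h : (j : ℕ) < a' + 1
  · rw [if_pos h]
    by_cases h0 : (j : ℕ) = 0
    · rw [if_pos h0, if_pos h0]
    · rw [if_neg h0, if_neg h0, if_pos (by omega), if_pos (by omega)]
  · rw [if_neg h, if_neg (by omega), if_neg (by omega), if_neg (by omega), if_neg (by omega)]
    have : (j : ℕ) + 1 - (a' + 1) = (j : ℕ) - a' := by omega
    rw [this]

/-- Reduction deleting the last (difference) column; needs `J` to dominate in the last row. -/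
lemma reduceA {m' : ℕ} (a : ℕ) (ha : a ≤ m') (I J : Fin (m' + 1 + 1) → Fin n)
    (hI : StrictMono I) (hJ : StrictMono J)
    (hlast : I (Fin.last (m' + 1)) < J (Fin.last (m' + 1)))
    (hminor : (Fmat a (fun ℓ : Fin (m' + 1) => MvPolynomial.X (I ℓ.castSucc))
        (fun ℓ => MvPolynomial.X (J ℓ.castSucc)) : Matrix _ _ R).det ≠ 0) :
    (Fmat a (fun ℓ => MvPolynomial.X (I ℓ)) (fun ℓ => MvPolynomial.X (J ℓ)) :
      Matrix _ _ R).det ≠ 0 := by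
  apply det_ne_zero_of_minor _ (lift (J (Fin.last (m' + 1)))) (m' + 1 - a)
    (Fin.last (m' + 1)) 1 _ _ _ one_ne_zero
  · rw [Fmat_minor_last]
    exact hminor
  · intro ℓ c
    apply lift_Fmat_entry_const
    · exact ne_of_lt (lt_trans (hI (Fin.castSucc_lt_last ℓ)) hlast)
    · exact ne_of_lt (hJ (Fin.castSucc_lt_last ℓ))
  · intro c hc
    have hcval : (c : ℕ) ≠ m' + 1 := fun h => hc (Fin.ext (by simpa using h))
    have hclt : (c : ℕ) < m' + 1 + 1 := c.isLt
    simp only [Fmat]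
    split_ifs with h0 h1
    · rw [_root_.map_one, Polynomial.coeff_one, if_neg (by omega)]
    · rw [lift_X_pow_of_ne (ne_of_lt hlast), Polynomial.coeff_C, if_neg (by omega)]
    · rw [map_sub, lift_X_pow_self, lift_X_pow_of_ne (ne_of_lt hlast),
        Polynomial.coeff_sub, Polynomial.coeff_X_pow, if_neg (by omega),
        Polynomial.coeff_C, if_neg (by omega), sub_zero]
  · simp only [Fmat]
    rw [if_neg (by simp), if_neg (by simp [Fin.val_last]; omega),
      map_sub, lift_X_pow_self, lift_X_pow_of_ne (ne_of_lt hlast), Polynomial.coeff_sub]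
    simp only [Polynomial.coeff_X_pow, Polynomial.coeff_C, Fin.val_last]
    rw [if_true, if_neg (by omega : ¬ (m' + 1 - a = 0)), sub_zero]

/-- Reduction deleting the last column when `I` dominates and `a` is small. -/
lemma reduceC1 {m' : ℕ} (a : ℕ) (hab : a < m' + 1 - a) (I J : Fin (m' + 1 + 1) → Fin n)
    (hI : StrictMono I) (hJ : StrictMono J)
    (hlast : J (Fin.last (m' + 1)) < I (Fin.last (m' + 1)))
    (hminor : (Fmat a (fun ℓ : Fin (m' + 1) => MvPolynomial.X (I ℓ.castSucc))
        (fun ℓ => MvPolynomial.X (J ℓ.castSucc)) : Matrix _ _ R).det ≠ 0) :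
    (Fmat a (fun ℓ => MvPolynomial.X (I ℓ)) (fun ℓ => MvPolynomial.X (J ℓ)) :
      Matrix _ _ R).det ≠ 0 := by
  have ha : a ≤ m' := by omega
  apply det_ne_zero_of_minor _ (lift (I (Fin.last (m' + 1)))) (m' + 1 - a)
    (Fin.last (m' + 1)) (-1) _ _ _ (neg_ne_zero.mpr one_ne_zero)
  · rw [Fmat_minor_last]
    exact hminor
  · intro ℓ c
    apply lift_Fmat_entry_const
    · exact ne_of_lt (hI (Fin.castSucc_lt_last ℓ))
    · exact ne_of_lt (lt_trans (hJ (Fin.castSucc_lt_last ℓ)) hlast)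
  · intro c hc
    have hcval : (c : ℕ) ≠ m' + 1 := fun h => hc (Fin.ext (by simpa using h))
    have hclt : (c : ℕ) < m' + 1 + 1 := c.isLt
    simp only [Fmat]
    split_ifs with h0 h1
    · rw [_root_.map_one, Polynomial.coeff_one, if_neg (by omega)]
    · rw [lift_X_pow_self, Polynomial.coeff_X_pow, if_neg (by omega)]
    · rw [map_sub, lift_X_pow_self, lift_X_pow_of_ne (ne_of_lt hlast),
        Polynomial.coeff_sub, Polynomial.coeff_X_pow, if_neg (by omega),
        Polynomial.coeff_C, if_neg (by omega), sub_zero]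
  · simp only [Fmat]
    rw [if_neg (by simp), if_neg (by simp [Fin.val_last]; omega),
      map_sub, lift_X_pow_self, lift_X_pow_of_ne (ne_of_lt hlast), Polynomial.coeff_sub]
    simp only [Polynomial.coeff_X_pow, Polynomial.coeff_C, Fin.val_last]
    rw [if_neg (by omega : ¬ (m' + 1 - a = 0)), if_true, zero_sub]

/-- Reduction deleting column `a` (the top `x`-power); covers the agreement case and
the case `J` last below `I` last with few difference columns. -/
lemma reduceC2 {m' : ℕ} (a' : ℕ) (ha : a' + 1 < m' + 1 + 1) (I J : Fin (m' + 1 + 1) → Fin n)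
    (hI : StrictMono I) (hJ : StrictMono J)
    (hle : J (Fin.last (m' + 1)) ≤ I (Fin.last (m' + 1)))
    (hcase : J (Fin.last (m' + 1)) = I (Fin.last (m' + 1)) ∨ m' + 1 - (a' + 1) < a' + 1)
    (hminor : (Fmat a' (fun ℓ : Fin (m' + 1) => MvPolynomial.X (I ℓ.castSucc))
        (fun ℓ => MvPolynomial.X (J ℓ.castSucc)) : Matrix _ _ R).det ≠ 0) :
    (Fmat (a' + 1) (fun ℓ => MvPolynomial.X (I ℓ)) (fun ℓ => MvPolynomial.X (J ℓ)) :
      Matrix _ _ R).det ≠ 0 := by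
  apply det_ne_zero_of_minor _ (lift (I (Fin.last (m' + 1)))) (a' + 1)
    (⟨a' + 1, ha⟩ : Fin (m' + 1 + 1)) 1 _ _ _ one_ne_zero
  · rw [Fmat_minor_colA]
    exact hminor
  · intro ℓ c
    apply lift_Fmat_entry_const
    · exact ne_of_lt (hI (Fin.castSucc_lt_last ℓ))
    · exact ne_of_lt (lt_of_lt_of_le (hJ (Fin.castSucc_lt_last ℓ)) hle)
  · intro c hc
    have hcval : (c : ℕ) ≠ a' + 1 := fun h => hc (Fin.ext (by simpa using h))
    have hclt : (c : ℕ) < m' + 1 + 1 := c.isLt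
    simp only [Fmat]
    split_ifs with h0 h1
    · rw [_root_.map_one, Polynomial.coeff_one, if_neg (by omega)]
    · rw [lift_X_pow_self, Polynomial.coeff_X_pow, if_neg (by omega)]
    · by_cases heq : J (Fin.last (m' + 1)) = I (Fin.last (m' + 1))
      · rw [heq, sub_self, map_zero, Polynomial.coeff_zero]
      · have hblt : m' + 1 - (a' + 1) < a' + 1 := by
          rcases hcase with h | h
          · exact absurd h heq
          · exact h
        rw [map_sub, lift_X_pow_of_ne heq, lift_X_pow_self, Polynomial.coeff_sub,
          Polynomial.coeff_C, if_neg (by omega),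
          Polynomial.coeff_X_pow, if_neg (by omega), sub_zero]
  · simp only [Fmat]
    rw [if_neg (by simp), if_pos (by simp),
      lift_X_pow_self, Polynomial.coeff_X_pow, if_pos rfl]
lemma vandermonde_X_det_ne_zero {N : ℕ} (w : Fin N → Fin n) (hw : Function.Injective w) :
    (Matrix.vandermonde (fun i => MvPolynomial.X (w i)) : Matrix _ _ R).det ≠ 0 := by
  rw [Matrix.det_vandermonde, Finset.prod_ne_zero_iff]
  intro i _
  rw [Finset.prod_ne_zero_iff]
  intro j hj
  rw [Finset.mem_Ioi] at hj
  apply sub_ne_zero.mpr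
  intro h
  exact absurd (hw (MvPolynomial.X_injective h)) (ne_of_gt hj)

lemma Fmat_det_ne_zero_main : ∀ (m a : ℕ), a ≤ m → ∀ (I J : Fin (m + 1) → Fin n),
    StrictMono I → StrictMono J →
    (Finset.univ.filter fun ℓ => I ℓ = J ℓ).card ≤ a + 1 →
    (Fmat a (fun ℓ => MvPolynomial.X (I ℓ)) (fun ℓ => MvPolynomial.X (J ℓ)) :
      Matrix _ _ R).det ≠ 0 := by
  intro m
  induction m using Nat.strong_induction_on with
  | _ m ih =>
  intro a ha I J hI hJ hg
  by_cases hb0 : m = a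
  · rw [Fmat_eq_vandermonde _ _ (by omega)]
    exact vandermonde_X_det_ne_zero I hI.injective
  · have hba : a < m := lt_of_le_of_ne ha (Ne.symm hb0)
    rcases Nat.exists_eq_succ_of_ne_zero (by omega : m ≠ 0) with ⟨m', rfl⟩
    by_cases hforce : (Finset.univ.filter fun ℓ => I ℓ = J ℓ).card = a + 1
    · exact Fmat_det_ne_zero_of_agree_eq (by omega) I J hI hJ hforce
    have hgle : (Finset.univ.filter fun ℓ => I ℓ = J ℓ).card ≤ a := by omega
    have hcard : ∀ (I' J' : Fin (m' + 1 + 1) → Fin n),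
        (Finset.univ.filter fun ℓ : Fin (m' + 1) => I' ℓ.castSucc = J' ℓ.castSucc).card
          ≤ (Finset.univ.filter fun ℓ : Fin (m' + 1 + 1) => I' ℓ = J' ℓ).card := by
      intro I' J'
      apply Finset.card_le_card_of_injOn (fun ℓ => ℓ.castSucc)
      · intro ℓ hl
        rw [Finset.mem_coe, Finset.mem_filter] at hl ⊢
        exact ⟨Finset.mem_univ _, hl.2⟩
      · intro p _ q _ h
        exact Fin.castSucc_injective _ h
    have hIm : StrictMono (fun ℓ : Fin (m' + 1) => I ℓ.castSucc) :=
      hI.comp Fin.strictMono_castSucc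
    have hJm : StrictMono (fun ℓ : Fin (m' + 1) => J ℓ.castSucc) :=
      hJ.comp Fin.strictMono_castSucc
    rcases lt_trichotomy (I (Fin.last (m' + 1))) (J (Fin.last (m' + 1))) with hlt | heq | hgt
    · -- delete last difference column
      apply reduceA a (by omega) I J hI hJ hlt
      exact ih m' (Nat.lt_succ_self m') a (by omega) _ _ hIm hJm
        (le_trans (hcard I J) (le_trans hgle (Nat.le_succ a)))
    · -- last row is an agreement row
      have hmem : Fin.last (m' + 1) ∈ (Finset.univ.filter fun ℓ => I ℓ = J ℓ) :=
        Finset.mem_filter.mpr ⟨Finset.mem_univ _, heq⟩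
      have hapos : 1 ≤ a := by
        have := Finset.card_pos.mpr ⟨_, hmem⟩
        omega
      rcases Nat.exists_eq_succ_of_ne_zero (by omega : a ≠ 0) with ⟨a', rfl⟩
      apply reduceC2 a' (by omega) I J hI hJ (le_of_eq heq.symm) (Or.inl heq.symm)
      have h1 : m' < m' + 1 := by omega
      have h2 : a' ≤ m' := by omega
      exact ih m' h1 a' h2 _ _ hIm hJm (le_trans (hcard I J) hgle)
    · rcases lt_trichotomy a (m' + 1 - a) with hab | haeq | hab2
      · -- a < b : delete last difference column, `I` dominating
        apply reduceC1 a hab I J hI hJ hgt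
        exact ih m' (Nat.lt_succ_self m') a (by omega) _ _ hIm hJm
          (le_trans (hcard I J) (le_trans hgle (Nat.le_succ a)))
      · -- a = b : swap the two blocks
        have hN : m' + 1 + 1 = a + a + 1 := by omega
        have hcardswap : (Finset.univ.filter fun ℓ : Fin (m' + 1 + 1) => J ℓ = I ℓ)
            = (Finset.univ.filter fun ℓ => I ℓ = J ℓ) := by
          ext x
          simp only [Finset.mem_filter]
          exact and_congr_right fun _ => eq_comm
        have h1 : (Fmat a (fun ℓ => MvPolynomial.X (J ℓ)) (fun ℓ => MvPolynomial.X (I ℓ)) :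
            Matrix _ _ R).det ≠ 0 := by
          apply reduceA a (by omega) J I hJ hI hgt
          exact ih m' (by omega) a (by omega) _ _ hJm hIm
            (le_trans (hcard J I) (by rw [hcardswap]; omega))
        rw [Fmat_det_eq_Vmat_det _ _ (fun c => by have := c.isLt; omega)] at h1 ⊢
        exact (Vmat_swap_det_ne_zero_iff hN _ _).mpr h1
      · -- b < a : delete the top `x`-power column
        have hapos : 1 ≤ a := by omega
        rcases Nat.exists_eq_succ_of_ne_zero (by omega : a ≠ 0) with ⟨a', rfl⟩
        apply reduceC2 a' (by omega) I J hI hJ (le_of_lt hgt) (Or.inr (by omega))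
        have h1 : m' < m' + 1 := by omega
        have h2 : a' ≤ m' := by omega
        exact ih m' h1 a' h2 _ _ hIm hJm (le_trans (hcard I J) hgle)

end DetAux

/-- If `I, J` are strictly increasing and agree on at most `k-1` coordinates,
then `det V_{I,J}(X)` is a nonzero polynomial in `ℤ[X_1,…,X_n]`. -/
theorem det_VIJ_ne_zero (n k : ℕ) (hk : 1 ≤ k)
    (I J : Fin (2 * k - 1) → Fin n) (hI : StrictMono I) (hJ : StrictMono J)
    (hagree : (Finset.univ.filter fun ℓ => I ℓ = J ℓ).card ≤ k - 1) :
    (VIJ n k I J).det ≠ 0 := by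
  classical
  obtain ⟨k', rfl⟩ : ∃ k', k = k' + 1 := ⟨k - 1, by omega⟩
  have h : 2 * (k' + 1) - 1 = (k' + k') + 1 := by omega
  set e : Fin ((k' + k') + 1) ≃ Fin (2 * (k' + 1) - 1) := finCongr h.symm with he
  rw [← Matrix.det_submatrix_equiv_self e (VIJ n (k' + 1) I J)]
  have hsub : (VIJ n (k' + 1) I J).submatrix e e
      = DetAux.Vmat k' (fun ℓ => MvPolynomial.X (I (e ℓ))) (fun ℓ => MvPolynomial.X (J (e ℓ))) := by
    apply Matrix.ext
    intro i j
    simp only [VIJ, Matrix.submatrix_apply, vandIJ, DetAux.Vmat, he, finCongr_apply,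
      Fin.coe_cast]
    norm_num
  rw [hsub, ← DetAux.Fmat_det_eq_Vmat_det _ _ (fun c => by have := c.isLt; omega)]
  apply DetAux.Fmat_det_ne_zero_main (k' + k') k' (by omega)
  · intro p q hpq
    exact hI hpq
  · intro p q hpq
    exact hJ hpq
  · have hle : (Finset.univ.filter fun ℓ : Fin ((k' + k') + 1) => I (e ℓ) = J (e ℓ)).card
        ≤ (Finset.univ.filter fun ℓ : Fin (2 * (k' + 1) - 1) => I ℓ = J ℓ).card := by
      apply Finset.card_le_card_of_injOn (fun ℓ => e ℓ)
      · intro ℓ hl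
        rw [Finset.mem_coe, Finset.mem_filter] at hl ⊢
        exact ⟨Finset.mem_univ _, hl.2⟩
      · intro p _ q _ hpq
        exact e.injective hpq
    calc (Finset.univ.filter fun ℓ : Fin ((k' + k') + 1) => I (e ℓ) = J (e ℓ)).card
        ≤ (Finset.univ.filter fun ℓ : Fin (2 * (k' + 1) - 1) => I ℓ = J ℓ).card := hle
      _ ≤ k' + 1 := le_trans hagree (by omega)
end

section
/- Let I, J ∈ [n]^{2k-1} be two strictly increasing vectors agreeing on at most k-1 coordinates. Then in the Leibniz expansion of det(V_{I,J}(X)) as a signed sum of (2k-1)! monomials (one per permutation), there exists a monomial obtained from exactly one permutation; in particular this monomial appears in det(V_{I,J}(X)) with coefficient ±1. -/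
/-!
Column `c` of `V_{I,J}` is `x^c` for `c < k` and `y^(c-k+1)` otherwise, so the Leibniz term of
a permutation `σ` (columns to rows) is the monomial with exponent `e(c)` at the variable of row
`σ c` in column `c`. As `I ≠ J` on at least `k` rows, the `x`-columns can be filled greedily,
from the largest down, with rows `σ c` such that `J b = I (σ c)` forces `b = σ c'` for a larger
`x`-column `c'`: among the unused rows where `I ≠ J`, some `I`-value is no `J`-value, since
strictly monotone maps with the same image on a finite set agree on its maximum. Then the
variables of the columns of `σ` are pairwise distinct. If `τ` gives the same monomial,
descending induction on the exponent `e` shows `τ = σ` on the two columns of exponent `e`: each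
of their variables under `τ` has exponent exactly `e`, the `y`-column cannot take the variable
`X_{I (σ c)}` of the `x`-column `c` because its row would be some `σ c'` with `c' > c`, where `τ`
already agrees with `σ`, and then the `x`-column cannot take the variable of the `y`-column.
So the monomial of `σ` comes from `σ` alone and has coefficient `sign σ` in the determinant.
-/

open Finset MvPolynomial

section Anchors

variable {ι β : Type*} [LinearOrder ι] [LinearOrder β] {I J : ι → β}

lemma exists_mem_forall_apply_ne (hI : StrictMono I) (hJ : StrictMono J) {S : Finset ι}
    (hS : S.Nonempty) (hSD : ∀ ℓ ∈ S, I ℓ ≠ J ℓ) : ∃ a ∈ S, ∀ b ∈ S, J b ≠ I a := by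
  by_contra! h
  have himage : S.image I = S.image J := by
    refine eq_of_subset_of_card_le (fun v hv => ?_) ?_
    · obtain ⟨a, ha, rfl⟩ := mem_image.mp hv
      obtain ⟨b, hb, hba⟩ := h a ha
      exact mem_image.mpr ⟨b, hb, hba⟩
    · rw [card_image_of_injective _ hI.injective, card_image_of_injective _ hJ.injective]
  -- strictly monotone maps send the maximum of `S` to the maximum of the image
  have hmax : (S.image I).max' (hS.image I) = (S.image J).max' (hS.image J) := by
    simp only [himage]
  rw [max'_image hI.monotone, max'_image hJ.monotone] at hmax
  exact hSD _ (S.max'_mem hS) hmax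

def IsAnchoredOn (I J : ι → β) (T : Finset ι) (σ : Equiv.Perm ι) : Prop :=
  ∀ c ∈ T, ∀ b, J b = I (σ c) → ∃ c' ∈ T, c < c' ∧ b = σ c'

variable [Fintype ι] [DecidableEq ι]

lemma exists_isAnchoredOn (hI : StrictMono I) (hJ : StrictMono J) (T : Finset ι)
    (hT : #T ≤ #{ℓ | I ℓ ≠ J ℓ}) : ∃ σ, IsAnchoredOn I J T σ := by
  induction T using Finset.induction_on_min with
  | empty => exact ⟨1, by simp [IsAnchoredOn]⟩
  | insert a T haT ih =>
    have haT' : a ∉ T := fun h => lt_irrefl a (haT a h)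
    rw [card_insert_of_notMem haT'] at hT
    obtain ⟨σ, hσ⟩ := ih (by omega)
    have hfree : (({ℓ | I ℓ ≠ J ℓ} : Finset ι) \ T.image σ).Nonempty := by
      rw [← card_pos]
      have := le_card_sdiff (T.image σ) ({ℓ | I ℓ ≠ J ℓ} : Finset ι)
      rw [card_image_of_injective _ σ.injective] at this
      omega
    obtain ⟨a₀, ha₀, hanchor⟩ := exists_mem_forall_apply_ne hI hJ hfree
      (fun ℓ hℓ => (mem_filter.mp (mem_sdiff.mp hℓ).1).2)
    have ha₀T : ∀ c ∈ T, σ c ≠ a₀ := fun c hc h =>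
      (mem_sdiff.mp ha₀).2 (mem_image.mpr ⟨c, hc, h⟩)
    have hσa : ∀ c ∈ T, σ c ≠ σ a := fun c hc h => haT' (σ.injective h ▸ hc)
    refine ⟨Equiv.swap (σ a) a₀ * σ, fun c hc b hb => ?_⟩
    have hfix : ∀ c ∈ T, (Equiv.swap (σ a) a₀ * σ) c = σ c := fun c hc =>
      Equiv.swap_apply_of_ne_of_ne (hσa c hc) (ha₀T c hc)
    rcases mem_insert.mp hc with rfl | hc
    · have hb : J b = I a₀ := by simpa using hb
      have hbT : b ∈ T.image σ := by
        by_contra hbT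
        by_cases hbD : I b = J b
        · have hba : b = a₀ := hI.injective (hbD.trans hb)
          exact (mem_filter.mp (mem_sdiff.mp ha₀).1).2 (hba ▸ hbD)
        · exact hanchor b (mem_sdiff.mpr ⟨by simpa using hbD, hbT⟩) hb
      obtain ⟨c', hc', rfl⟩ := mem_image.mp hbT
      exact ⟨c', mem_insert_of_mem hc', haT c' hc', (hfix c' hc').symm⟩
    · obtain ⟨c', hc', hcc', rfl⟩ := hσ c hc b (by rwa [hfix c hc] at hb)
      exact ⟨c', mem_insert_of_mem hc', hcc', (hfix c' hc').symm⟩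

end Anchors

section LeibnizMonomial

variable {ι V : Type*} [Fintype ι] (u : ι → ι → V) (e : ι → ℕ)

noncomputable def leibnizExponent (τ : Equiv.Perm ι) : V →₀ ℕ :=
  ∑ c, Finsupp.single (u c (τ c)) (e c)

variable {u e}

lemma prod_X_pow_eq_monomial_leibnizExponent {R : Type*} [CommSemiring R] (τ : Equiv.Perm ι) :
    ∏ c, (X (u c (τ c)) ^ e c : MvPolynomial V R) = monomial (leibnizExponent u e τ) 1 := by
  simp only [leibnizExponent, monomial_sum_one, X_pow_eq_monomial]

variable [DecidableEq V] {σ τ : Equiv.Perm ι}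

lemma leibnizExponent_apply (τ : Equiv.Perm ι) (v : V) :
    leibnizExponent u e τ v = ∑ c, if u c (τ c) = v then e c else 0 := by
  simp only [leibnizExponent, Finsupp.finsetSum_apply, Finsupp.single_apply]

lemma sum_le_leibnizExponent {v : V} (S : Finset ι) (hS : ∀ c ∈ S, u c (τ c) = v) :
    ∑ c ∈ S, e c ≤ leibnizExponent u e τ v := by
  rw [leibnizExponent_apply]
  calc ∑ c ∈ S, e c = ∑ c ∈ S, if u c (τ c) = v then e c else 0 :=
        sum_congr rfl fun c hc => (if_pos (hS c hc)).symm
    _ ≤ _ := sum_le_sum_of_subset (subset_univ S)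

lemma leibnizExponent_apply_of_injective (hσ : Function.Injective fun c => u c (σ c)) (c : ι) :
    leibnizExponent u e σ (u c (σ c)) = e c := by
  rw [leibnizExponent_apply, sum_eq_single c (fun c' _ hc' => if_neg fun h => hc' (hσ h))
    (fun h => absurd (mem_univ c) h), if_pos rfl]

lemma exists_of_leibnizExponent_ne_zero {v : V} (hv : leibnizExponent u e σ v ≠ 0) :
    ∃ c, u c (σ c) = v := by
  by_contra! h
  exact hv (by simp [leibnizExponent_apply, h])

variable [DecidableEq ι]

lemma apply_ne_of_leibnizExponent_eq (hσ : Function.Injective fun c => u c (σ c))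
    (h : leibnizExponent u e τ = leibnizExponent u e σ) {c₁ c₂ : ι} (hne : c₁ ≠ c₂)
    (hc₁ : e c₁ ≠ 0) (hc₂ : τ c₂ = σ c₂) : u c₁ (τ c₁) ≠ u c₂ (σ c₂) := by
  intro heq
  have hle := sum_le_leibnizExponent (u := u) (e := e) (τ := τ) (v := u c₂ (σ c₂)) {c₁, c₂}
    (by simp [heq, hc₂])
  rw [sum_pair hne, h, leibnizExponent_apply_of_injective hσ] at hle
  omega

lemma exists_eq_of_leibnizExponent_eq (hσ : Function.Injective fun c => u c (σ c))
    (h : leibnizExponent u e τ = leibnizExponent u e σ) {c : ι} (hc : e c ≠ 0)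
    (hhigh : ∀ c', e c < e c' → τ c' = σ c') : ∃ c', e c' = e c ∧ u c (τ c) = u c' (σ c') := by
  have hle : e c ≤ leibnizExponent u e σ (u c (τ c)) := by
    simpa [← h] using sum_le_leibnizExponent (e := e) {c} (by simp)
  obtain ⟨c', hc'⟩ := exists_of_leibnizExponent_ne_zero (Nat.pos_of_ne_zero hc |>.trans_le hle).ne'
  rw [← hc', leibnizExponent_apply_of_injective hσ] at hle
  refine ⟨c', ?_, hc'.symm⟩
  by_contra hne
  have hlt : e c < e c' := by omega
  exact apply_ne_of_leibnizExponent_eq hσ h (by rintro rfl; omega) hc (hhigh c' hlt) hc'.symm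

variable {R : Type*} [CommRing R]

lemma coeff_det_leibnizExponent
    (huniq : ∀ τ, leibnizExponent u e τ = leibnizExponent u e σ → τ = σ) :
    (Matrix.of fun r c => (X (u c r) ^ e c : MvPolynomial V R)).det.coeff
      (leibnizExponent u e σ) = (Equiv.Perm.sign σ : ℤ) := by
  simp only [Matrix.det_apply', Matrix.of_apply, prod_X_pow_eq_monomial_leibnizExponent,
    ← map_intCast (C : R →+* MvPolynomial V R), coeff_sum, coeff_C_mul, coeff_monomial, mul_ite,
    mul_one, mul_zero]
  rw [sum_eq_single σ (fun τ _ hτ => if_neg fun h => hτ (huniq τ h))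
    (fun h => absurd (mem_univ σ) h), if_pos rfl]

end LeibnizMonomial

lemma Equiv.Perm.eq_of_apply_eq_of_ne {α : Type*} {σ τ : Equiv.Perm α} (a : α)
    (h : ∀ x ≠ a, τ x = σ x) : τ = σ := by
  ext x
  by_cases hx : x = a
  · subst hx
    by_contra hne
    have hy : σ.symm (τ x) ≠ x := fun hy => hne (σ.symm_apply_eq.mp hy)
    exact hy (τ.injective ((h _ hy).trans (σ.apply_symm_apply _)))
  · exact h x hx

namespace VIJ

/-- Column `c` of `V_{I,J}` is `x ^ c` for `c < k` (the constant column being `x ^ 0`) and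
`y ^ (c - (k - 1))` otherwise, where `x = X_{I ℓ}` and `y = X_{J ℓ}` as recorded by `var`. -/
def exponent (k : ℕ) (c : Fin (2 * k - 1)) : ℕ := if (c : ℕ) < k then c else c - (k - 1)

def var {n : ℕ} (k : ℕ) (I J : Fin (2 * k - 1) → Fin n) (c ℓ : Fin (2 * k - 1)) : Fin n :=
  if (c : ℕ) < k then I ℓ else J ℓ

def xCols (k : ℕ) : Finset (Fin (2 * k - 1)) := {c | (c : ℕ) < k}

variable {n k : ℕ} {I J : Fin (2 * k - 1) → Fin n}

lemma eq_of_X_pow : VIJ n k I J = Matrix.of fun ℓ c => X (var k I J c ℓ) ^ exponent k c := by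
  ext ℓ c
  simp only [VIJ, vandIJ, var, exponent, Matrix.of_apply]
  split_ifs <;> first | omega | simp_all

lemma prod_eq_monomial (σ : Equiv.Perm (Fin (2 * k - 1))) :
    ∏ ℓ, VIJ n k I J (σ ℓ) ℓ = monomial (leibnizExponent (var k I J) (exponent k) σ) 1 := by
  simp only [eq_of_X_pow, Matrix.of_apply, prod_X_pow_eq_monomial_leibnizExponent]

lemma card_xCols_le : #(xCols k) ≤ k := by
  simpa using card_le_card_of_injOn (t := range k) Fin.val
    (fun c hc => by simpa [xCols] using hc) Fin.val_injective.injOn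

lemma exponent_lt (c : Fin (2 * k - 1)) : exponent k c < k := by
  have := c.isLt
  unfold exponent; split_ifs <;> omega

lemma exponent_eq_zero_iff {c : Fin (2 * k - 1)} : exponent k c = 0 ↔ (c : ℕ) = 0 := by
  unfold exponent; split_ifs <;> omega

variable {σ τ : Equiv.Perm (Fin (2 * k - 1))}

lemma exists_of_isAnchoredOn_xCols (hσ : IsAnchoredOn I J (xCols k) σ) {c : Fin (2 * k - 1)}
    (hc : (c : ℕ) < k) {b : Fin (2 * k - 1)} (h : J b = I (σ c)) :
    ∃ c', c < c' ∧ (c' : ℕ) < k ∧ b = σ c' := by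
  obtain ⟨c', hc', hcc', hb⟩ := hσ c (by simpa [xCols] using hc) b h
  exact ⟨c', hcc', by simpa [xCols] using hc', hb⟩

lemma injective_var_of_isAnchoredOn (hI : Function.Injective I) (hJ : Function.Injective J)
    (hσ : IsAnchoredOn I J (xCols k) σ) : Function.Injective fun c => var k I J c (σ c) := by
  intro c₁ c₂ h
  simp only [var] at h
  split_ifs at h with h₁ h₂ h₂
  · exact σ.injective (hI h)
  · obtain ⟨c', -, hc', hc₂⟩ := exists_of_isAnchoredOn_xCols hσ h₁ h.symm
    exact absurd (σ.injective hc₂ ▸ hc') h₂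
  · obtain ⟨c', -, hc', hc₁⟩ := exists_of_isAnchoredOn_xCols hσ h₂ h
    exact absurd (σ.injective hc₁ ▸ hc') h₁
  · exact σ.injective (hJ h)

variable (hI : Function.Injective I) (hJ : Function.Injective J)
  (hσ : IsAnchoredOn I J (xCols k) σ)
  (h : leibnizExponent (var k I J) (exponent k) τ = leibnizExponent (var k I J) (exponent k) σ)
include hI hJ hσ h

lemma apply_eq_of_le_of_isAnchoredOn {c : Fin (2 * k - 1)} (hc : k ≤ (c : ℕ))
    (hhigh : ∀ c', exponent k c < exponent k c' → τ c' = σ c') : τ c = σ c := by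
  obtain ⟨c', hexp, hvar⟩ := exists_eq_of_leibnizExponent_eq
    (injective_var_of_isAnchoredOn hI hJ hσ) h (by rw [Ne, exponent_eq_zero_iff]; omega) hhigh
  simp only [var, exponent, if_neg (not_lt.mpr hc)] at hexp hvar
  split_ifs at hexp hvar with hc'
  · -- `τ c` would be `σ c''` for an `x`-column `c''` above `c'`, where `τ` already agrees with `σ`
    obtain ⟨c'', hc'c'', hc'', hτc⟩ := exists_of_isAnchoredOn_xCols hσ hc' hvar
    have hτc'' := hhigh c'' (by simp only [exponent, if_pos hc'', if_neg (not_lt.mpr hc)]; omega)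
    have := τ.injective (hτc.trans hτc''.symm)
    omega
  · obtain rfl : c' = c := Fin.ext (by omega)
    exact hJ hvar

lemma apply_eq_of_lt_of_isAnchoredOn {c : Fin (2 * k - 1)} (hc : (c : ℕ) < k) (hc₀ : (c : ℕ) ≠ 0)
    (hhigh : ∀ c', exponent k c < exponent k c' → τ c' = σ c') : τ c = σ c := by
  have hexp_c : exponent k c = c := if_pos hc
  obtain ⟨p, hp⟩ : ∃ p : Fin (2 * k - 1), (p : ℕ) = c + (k - 1) := ⟨⟨_, by omega⟩, rfl⟩
  have hexp_p : exponent k p = c := by unfold exponent; split_ifs <;> omega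
  have hτp : τ p = σ p :=
    apply_eq_of_le_of_isAnchoredOn hI hJ hσ h (by omega) (by rwa [hexp_p, ← hexp_c])
  obtain ⟨c', hexp, hvar⟩ := exists_eq_of_leibnizExponent_eq
    (injective_var_of_isAnchoredOn hI hJ hσ) h (by omega) hhigh
  rw [hexp_c] at hexp
  unfold exponent at hexp
  split_ifs at hexp with hc'
  · obtain rfl : c' = c := Fin.ext hexp
    exact hI (by simpa [var, if_pos hc] using hvar)
  · obtain rfl : c' = p := Fin.ext (by omega)
    exact absurd hvar (apply_ne_of_leibnizExponent_eq (injective_var_of_isAnchoredOn hI hJ hσ) h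
      (fun hcp => by rw [← hcp] at hp; omega) (by omega) hτp)

lemma eq_of_leibnizExponent_eq_of_isAnchoredOn : τ = σ := by
  have hpos : ∀ c, exponent k c ≠ 0 → τ c = σ c := by
    intro c
    induction hm : k - exponent k c using Nat.strong_induction_on generalizing c with
    | _ m ih =>
      intro hc
      have hhigh : ∀ c', exponent k c < exponent k c' → τ c' = σ c' := fun c' hcc' =>
        ih _ (by have := exponent_lt c'; omega) c' rfl (by omega)
      by_cases hck : k ≤ (c : ℕ)
      · exact apply_eq_of_le_of_isAnchoredOn hI hJ hσ h hck hhigh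
      · exact apply_eq_of_lt_of_isAnchoredOn hI hJ hσ h (by omega)
          (by rwa [Ne, exponent_eq_zero_iff] at hc) hhigh
  refine Equiv.ext fun c => ?_
  by_cases hc : exponent k c = 0
  · refine congrArg (· c) (Equiv.Perm.eq_of_apply_eq_of_ne c fun c' hc' => hpos c' ?_)
    rw [Ne, exponent_eq_zero_iff]
    rw [exponent_eq_zero_iff] at hc
    exact fun h0 => hc' (Fin.ext (h0.trans hc.symm))
  · exact hpos c hc

end VIJ

theorem exists_unique_monomial_in_det_general (n k : ℕ)
    (I J : Fin (2 * k - 1) → Fin n) (hI : StrictMono I) (hJ : StrictMono J)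
    (hagree : (Finset.univ.filter fun ℓ => I ℓ = J ℓ).card ≤ k - 1) :
    ∃ σ₀ : Equiv.Perm (Fin (2 * k - 1)),
      (∀ σ : Equiv.Perm (Fin (2 * k - 1)),
        (∏ ℓ, VIJ n k I J (σ ℓ) ℓ) = (∏ ℓ, VIJ n k I J (σ₀ ℓ) ℓ) → σ = σ₀) ∧
      ∃ d : Fin n →₀ ℕ,
        (∏ ℓ, VIJ n k I J (σ₀ ℓ) ℓ) = MvPolynomial.monomial d 1 ∧
        ((VIJ n k I J).det.coeff d = 1 ∨ (VIJ n k I J).det.coeff d = -1) := by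
  have hcard : #(VIJ.xCols k) ≤ #{ℓ | I ℓ ≠ J ℓ} := by
    have := card_filter_add_card_filter_not (s := univ) fun ℓ => I ℓ = J ℓ
    have := VIJ.card_xCols_le (k := k)
    simp only [card_univ, Fintype.card_fin, ne_eq] at *
    omega
  obtain ⟨σ₀, hσ₀⟩ := exists_isAnchoredOn hI hJ _ hcard
  have huniq := fun τ => VIJ.eq_of_leibnizExponent_eq_of_isAnchoredOn (τ := τ)
    hI.injective hJ.injective hσ₀
  refine ⟨σ₀, fun τ hτ => huniq τ ?_, _, VIJ.prod_eq_monomial σ₀, ?_⟩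
  · rw [VIJ.prod_eq_monomial, VIJ.prod_eq_monomial] at hτ
    exact monomial_left_injective one_ne_zero hτ
  · rw [VIJ.eq_of_X_pow, coeff_det_leibnizExponent huniq]
    rcases Int.units_eq_one_or (Equiv.Perm.sign σ₀) with hs | hs <;> simp [hs]

/-- In the Leibniz expansion of `det V_{I,J}(X)` there is a monomial obtained from
exactly one permutation; that monomial appears with coefficient `±1` in the
determinant. -/
theorem exists_unique_monomial_in_det (n k : ℕ) (hk : 1 ≤ k)
    (I J : Fin (2 * k - 1) → Fin n) (hI : StrictMono I) (hJ : StrictMono J)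
    (hagree : (Finset.univ.filter fun ℓ => I ℓ = J ℓ).card ≤ k - 1) :
    ∃ σ₀ : Equiv.Perm (Fin (2 * k - 1)),
      (∀ σ : Equiv.Perm (Fin (2 * k - 1)),
        (∏ ℓ, VIJ n k I J (σ ℓ) ℓ) = (∏ ℓ, VIJ n k I J (σ₀ ℓ) ℓ) → σ = σ₀) ∧
      ∃ d : Fin n →₀ ℕ,
        (∏ ℓ, VIJ n k I J (σ₀ ℓ) ℓ) = MvPolynomial.monomial d 1 ∧
        ((VIJ n k I J).det.coeff d = 1 ∨ (VIJ n k I J).det.coeff d = -1) :=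
  exists_unique_monomial_in_det_general n k I J hI hJ hagree
end

section
/- Let p be a prime and let P_1(γ),...,P_m(γ) ∈ F_p[γ] be polynomials of degree less than p that are linearly independent over F_p. Let Q = gcd(P_1,...,P_m) and set P̄_j = P_j / Q. Then P̄_1, ..., P̄_m are linearly independent over the field F_p(γ^p) of rational functions in γ^p. -/
/-!
Write `P j = Q * P̄ j`. Dividing by the nonzero `Q` keeps the `P̄ j` linearly independent over
`F_p` and of degree `< p`. For such polynomials the coefficient of `γ^(d p + k)`, `k < p`, in
`Σ_j c_j(γ^p) P̄_j(γ)` is `Σ_j (coeff d c_j) (coeff k P̄_j)`, so a relation over `F_p[γ^p]`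
splits into one `F_p`-relation `Σ_j (coeff d c_j) P̄_j = 0` for each `d`.
-/

open Polynomial

theorem coeff_expand_mul_add_of_natDegree_lt {R : Type*} [CommSemiring R] {p : ℕ}
    (a : R[X]) {b : R[X]} (hb : b.natDegree < p) (d : ℕ) {k : ℕ} (hk : k < p) :
    (expand R p a * b).coeff (d * p + k) = a.coeff d * b.coeff k := by
  induction a using Polynomial.induction_on' with
  | add f g hf hg => simp only [map_add, add_mul, coeff_add, hf, hg]
  | monomial n r =>
    rw [expand_monomial, ← C_mul_X_pow_eq_monomial, ← C_mul_X_pow_eq_monomial, mul_assoc,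
      coeff_C_mul, coeff_X_pow_mul', coeff_C_mul_X_pow]
    by_cases hnd : d = n
    · subst hnd
      simp
    · rw [if_neg hnd, zero_mul, mul_ite, mul_zero, ite_eq_right_iff]
      intro hle
      have hlt : n < d := by
        have := lt_of_mul_lt_mul_right (a := p) (by linarith : n * p < (d + 1) * p)
        omega
      have : n * p + p ≤ d * p := by simpa [add_mul] using Nat.mul_le_mul_right p hlt
      rw [coeff_eq_zero_of_natDegree_lt (by omega), mul_zero]

theorem eq_zero_of_sum_expand_mul_eq_zero {R ι : Type*} [CommRing R] [Fintype ι] {p : ℕ}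
    {b : ι → R[X]} (hb : LinearIndependent R b) (hdeg : ∀ j, (b j).natDegree < p)
    {c : ι → R[X]} (hc : ∑ j, expand R p (c j) * b j = 0) : c = 0 := by
  funext j
  ext d
  have hrel : ∑ j, (c j).coeff d • b j = 0 := by
    ext k
    simp only [finsetSum_coeff, coeff_smul, smul_eq_mul, coeff_zero]
    by_cases hk : k < p
    · have := congr_arg (coeff · (d * p + k)) hc
      simpa only [finsetSum_coeff, coeff_zero,
        coeff_expand_mul_add_of_natDegree_lt _ (hdeg _) d hk] using this
    · exact Finset.sum_eq_zero fun j _ => by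
        rw [coeff_eq_zero_of_natDegree_lt ((hdeg j).trans_le (not_lt.mp hk)), mul_zero]
  exact Fintype.linearIndependent_iff.mp hb _ hrel j

/-- Let `P_1,…,P_m ∈ F_p[γ]` have degree `< p` and be linearly independent over
`F_p`. With `Q = gcd(P_1,…,P_m)` and `P̄_j = P_j / Q`, the `P̄_j` are linearly
independent over `F_p(γ^p)` — equivalently (after clearing denominators) there is
no nontrivial relation `Σ_j c_j(γ^p) · P̄_j(γ) = 0` with polynomials `c_j`. -/
theorem pbar_linearIndependent_over_frobenius_field (p m : ℕ) [Fact p.Prime]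
    (P : Fin m → Polynomial (ZMod p))
    (hdeg : ∀ j, (P j).natDegree < p)
    (hli : LinearIndependent (ZMod p) P)
    (Q : Polynomial (ZMod p)) (hQ : Q = Finset.univ.gcd P)
    (Pbar : Fin m → Polynomial (ZMod p)) (hPbar : ∀ j, Pbar j = P j / Q) :
    ∀ c : Fin m → Polynomial (ZMod p),
      (∑ j, (c j).comp (Polynomial.X ^ p) * Pbar j) = 0 → ∀ j, c j = 0 := by
  intro c hc j₀
  have hQdvd : ∀ j, Q ∣ P j := fun j => hQ ▸ Finset.gcd_dvd (Finset.mem_univ j)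
  have hQ0 : Q ≠ 0 := fun h => hli.ne_zero j₀ (zero_dvd_iff.mp (h ▸ hQdvd j₀))
  have hmul : ∀ j, Q * Pbar j = P j := fun j => by
    rw [hPbar, EuclideanDomain.mul_div_cancel' hQ0 (hQdvd j)]
  have hliPbar : LinearIndependent (ZMod p) Pbar :=
    have hcomp : ⇑(LinearMap.mulLeft (ZMod p) Q) ∘ Pbar = P := funext hmul
    .of_comp _ (hcomp ▸ hli)
  have hdegPbar : ∀ j, (Pbar j).natDegree < p := fun j =>
    (natDegree_le_of_dvd ⟨Q, by rw [← hmul, mul_comm]⟩ (hli.ne_zero j)).trans_lt (hdeg j)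
  simp only [← expand_eq_comp_X_pow] at hc
  exact congr_fun (eq_zero_of_sum_expand_mul_eq_zero hliPbar hdegPbar hc) j₀
end

section
/- (Mason–Stothers variant over F_p) Let m ≥ 2 and Y_0 = Y_1 + ... + Y_m with Y_j ∈ F_p[x], gcd(Y_0, ..., Y_m) = 1, and Y_1, ..., Y_m linearly independent over F_p(x^p). Then deg(Y_0) ≤ -C(m,2) + (m-1) · Σ_{j=0}^m ν(Y_j), where ν(Y) denotes the number of distinct roots of Y (in an algebraic closure) whose multiplicity is not divisible by p. -/
open Polynomial Matrix Finset
open scoped Classical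

set_option maxHeartbeats 1000000

section Aux
variable {p : ℕ} [Fact p.Prime]




private lemma comp_of_deriv_zero {f : Polynomial (ZMod p)} (hf : derivative f = 0) :
    ∃ F : Polynomial (ZMod p), F.comp (X ^ p) = f := by
  refine ⟨Polynomial.contract p f, ?_⟩
  rw [← expand_eq_comp_X_pow]
  exact Polynomial.expand_contract p hf (Fact.out (p := p.Prime)).ne_zero

private lemma deriv_zero_of_self_dvd {f : Polynomial (ZMod p)} (h : f ∣ derivative f) :
    derivative f = 0 := by
  by_contra hd
  have hf : f ≠ 0 := by rintro rfl; simp at hd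
  exact absurd (Polynomial.degree_le_of_dvd h hd) (not_le.mpr (degree_derivative_lt hf))

/-- If `f' g = f g'` with `g ≠ 0` then `f/g` is a ratio of polynomials in `x^p`. -/
private lemma ratio_in_xp {f g : Polynomial (ZMod p)} (hg : g ≠ 0)
    (h : derivative f * g = f * derivative g) :
    ∃ F G : Polynomial (ZMod p), G ≠ 0 ∧ f * G.comp (X ^ p) = g * F.comp (X ^ p) := by
  rcases eq_or_ne f 0 with rfl | hf
  · exact ⟨0, 1, one_ne_zero, by simp⟩
  set d := GCDMonoid.gcd f g with hd
  have hd0 : d ≠ 0 := gcd_ne_zero_of_left hf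
  obtain ⟨f1, hf1⟩ : d ∣ f := gcd_dvd_left f g
  obtain ⟨g1, hg1⟩ : d ∣ g := gcd_dvd_right f g
  have hf1' : f / d = f1 := by rw [hf1]; exact mul_div_cancel_left₀ _ hd0
  have hg1' : g / d = g1 := by rw [hg1]; exact mul_div_cancel_left₀ _ hd0
  have hcop : IsCoprime f1 g1 := by
    rw [← hf1', ← hg1']; exact isCoprime_div_gcd_div_gcd hg
  have hg10 : g1 ≠ 0 := by rintro rfl; simp at hg1; exact hg hg1
  have key : derivative f1 * g1 = f1 * derivative g1 := by
    have expand : d * d * (derivative f1 * g1) = d * d * (f1 * derivative g1) := by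
      have h' := h
      rw [hf1, hg1, derivative_mul, derivative_mul] at h'
      ring_nf at h' ⊢
      linear_combination h'
    exact mul_left_cancel₀ (mul_ne_zero hd0 hd0) expand
  have hfd : derivative f1 = 0 := by
    apply deriv_zero_of_self_dvd
    exact hcop.dvd_of_dvd_mul_right ⟨derivative g1, key.symm ▸ by ring⟩
  have hgd : derivative g1 = 0 := by
    apply deriv_zero_of_self_dvd
    exact hcop.symm.dvd_of_dvd_mul_right ⟨derivative f1, by linear_combination -key⟩
  obtain ⟨F, hF⟩ := comp_of_deriv_zero hfd
  obtain ⟨G, hG⟩ := comp_of_deriv_zero hgd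
  refine ⟨F, G, ?_, ?_⟩
  · rintro rfl; simp at hG; exact hg10 hG.symm
  · rw [hF, hG, hf1, hg1]; ring

private lemma iter_deriv_comm {R S : Type*} [CommSemiring R] [CommSemiring S] (φ : R →+* S)
    (f : Polynomial R) (n : ℕ) :
    derivative^[n] (f.map φ) = (derivative^[n] f).map φ := by
  induction n with
  | zero => rfl
  | succ n ih => rw [Function.iterate_succ_apply', Function.iterate_succ_apply', ih,
      Polynomial.derivative_map]


private lemma wronskian_ne_zero : ∀ (n : ℕ) (Y : Fin n → Polynomial (ZMod p)),
    (∀ c : Fin n → Polynomial (ZMod p),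
      (∑ j, (c j).comp (X ^ p) * Y j) = 0 → ∀ j, c j = 0) →
    (Matrix.of fun i j : Fin n => derivative^[(i : ℕ)] (Y j)).det ≠ 0 := by
  intro n
  induction n with
  | zero => intro Y _; simp [Matrix.det_fin_zero]
  | succ n IH =>
    intro Y hli
    set M : Matrix (Fin (n+1)) (Fin (n+1)) (Polynomial (ZMod p)) :=
      Matrix.of fun i j => derivative^[(i : ℕ)] (Y j) with hMdef
    by_contra hW
    set N : Matrix (Fin n) (Fin n) (Polynomial (ZMod p)) :=
      Matrix.of fun i j => derivative^[(i : ℕ)] (Y j.castSucc) with hNdef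
    have hWn : N.det ≠ 0 := by
      apply IH
      intro c hc j
      have h2 : (∑ j, ((Fin.snoc c 0 : Fin (n+1) → Polynomial (ZMod p)) j).comp (X ^ p) * Y j) = 0 := by
        rw [Fin.sum_univ_castSucc]
        simpa using hc
      have := hli _ h2 j.castSucc
      simpa using this
    set u : Fin (n+1) → Polynomial (ZMod p) :=
      fun j => (-1)^(n + (j : ℕ)) * (M.submatrix (Fin.last n).succAbove j.succAbove).det with hudef
    have hux : ∀ r : Fin (n+1) → Polynomial (ZMod p),
        (M.updateRow (Fin.last n) r).det = ∑ j, u j * r j := by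
      intro r
      rw [Matrix.det_succ_row _ (Fin.last n)]
      refine Finset.sum_congr rfl fun j _ => ?_
      have hsub : (M.updateRow (Fin.last n) r).submatrix (Fin.last n).succAbove j.succAbove
          = M.submatrix (Fin.last n).succAbove j.succAbove := by
        ext i k
        simp [Matrix.submatrix_apply, Fin.succAbove_last,
          Matrix.updateRow_ne (Fin.castSucc_lt_last i).ne]
      rw [hsub, Matrix.updateRow_self]
      simp only [Fin.val_last]
      ring
    have h0 : ∀ i : Fin (n+1), ∑ j, u j * M i j = 0 := by
      intro i
      rcases eq_or_ne i (Fin.last n) with rfl | hne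
      · rw [← hux (M (Fin.last n)), Matrix.updateRow_eq_self]; exact hW
      · rw [← hux (M i)]
        exact Matrix.det_updateRow_eq_zero hne
    have hlastu : u (Fin.last n) = N.det := by
      have h1 : (M.submatrix (Fin.last n).succAbove (Fin.last n).succAbove) = N := by
        ext i k
        simp [hMdef, hNdef, Matrix.submatrix_apply, Fin.succAbove_last]
      rw [hudef]
      simp only [h1, Fin.val_last]
      have : ((-1 : Polynomial (ZMod p)))^(n + n) = 1 := Even.neg_one_pow ⟨n, rfl⟩
      rw [this, one_mul]
    have hder : ∀ i : Fin n, ∑ j, derivative (u j) * M i.castSucc j = 0 := by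
      intro i
      have hD := congrArg derivative (h0 i.castSucc)
      rw [derivative_sum] at hD
      simp only [derivative_mul] at hD
      rw [Finset.sum_add_distrib] at hD
      have hrow : ∀ j, derivative (M i.castSucc j) = M i.succ j := by
        intro j
        show derivative (derivative^[(i.castSucc : ℕ)] (Y j)) = derivative^[(i.succ : ℕ)] (Y j)
        rw [Fin.coe_castSucc, Fin.val_succ, Function.iterate_succ_apply']
      have : ∑ j, u j * derivative (M i.castSucc j) = 0 := by
        simp_rw [hrow]; exact h0 i.succ
      rw [this, add_zero, map_zero] at hD
      exact hD
    set z : Fin (n+1) → Polynomial (ZMod p) :=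
      fun j => derivative (u j) * u (Fin.last n) - u j * derivative (u (Fin.last n)) with hzdef
    have hzlast : z (Fin.last n) = 0 := by simp [hzdef, mul_comm]
    have hz : ∀ i : Fin n, ∑ j, M i.castSucc j * z j = 0 := by
      intro i
      have : ∑ j, M i.castSucc j * z j
          = (∑ j, derivative (u j) * M i.castSucc j) * u (Fin.last n)
            - (∑ j, u j * M i.castSucc j) * derivative (u (Fin.last n)) := by
        rw [Finset.sum_mul, Finset.sum_mul, ← Finset.sum_sub_distrib]
        refine Finset.sum_congr rfl fun j _ => ?_
        simp [hzdef]; ring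
      rw [this, hder i, h0 i.castSucc, zero_mul, zero_mul, sub_zero]
    have hv : N.mulVec (fun j => z j.castSucc) = 0 := by
      funext i
      show ∑ j, N i j * z j.castSucc = 0
      have := hz i
      rw [Fin.sum_univ_castSucc] at this
      rw [hzlast, mul_zero, add_zero] at this
      simpa [hMdef, hNdef, Matrix.mulVec, dotProduct] using this
    have hz0 : ∀ j, z j = 0 := by
      have hsmul : N.det • (fun j => z j.castSucc) = (0 : Fin n → Polynomial (ZMod p)) := by
        calc N.det • (fun j => z j.castSucc)
            = (N.det • (1 : Matrix (Fin n) (Fin n) (Polynomial (ZMod p)))).mulVec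
                (fun j => z j.castSucc) := by
              rw [Matrix.smul_mulVec, Matrix.one_mulVec]
          _ = N.adjugate.mulVec (N.mulVec fun j => z j.castSucc) := by
              rw [Matrix.mulVec_mulVec, Matrix.adjugate_mul]
          _ = 0 := by rw [hv, Matrix.mulVec_zero]
      intro j
      refine Fin.lastCases hzlast (fun i => ?_) j
      have := congrFun hsmul i
      simp only [Pi.smul_apply, smul_eq_mul, Pi.zero_apply] at this
      exact (mul_eq_zero.mp this).resolve_left hWn
    have hzz : ∀ j, derivative (u j) * u (Fin.last n) = u j * derivative (u (Fin.last n)) :=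
      fun j => sub_eq_zero.mp (hz0 j)
    have hulast : u (Fin.last n) ≠ 0 := by rw [hlastu]; exact hWn
    have hFG : ∀ j, ∃ F G : Polynomial (ZMod p), G ≠ 0 ∧
        u j * G.comp (X ^ p) = u (Fin.last n) * F.comp (X ^ p) :=
      fun j => ratio_in_xp hulast (hzz j)
    choose F G hG0 hFGrel using hFG
    set c : Fin (n+1) → Polynomial (ZMod p) :=
      fun j => F j * ∏ k ∈ Finset.univ.erase j, G k with hcdef
    have hrel0 : ∑ j, u j * Y j = 0 := by
      have := h0 0
      simpa [hMdef] using this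
    have hcsum : (∑ j, (c j).comp (X ^ p) * Y j) = 0 := by
      have hmul : u (Fin.last n) * (∑ j, (c j).comp (X ^ p) * Y j) = 0 := by
        rw [Finset.mul_sum]
        have : ∀ j, u (Fin.last n) * ((c j).comp (X ^ p) * Y j)
            = (∏ k, (G k).comp (X ^ p)) * (u j * Y j) := by
          intro j
          have hc : (c j).comp (X ^ p)
              = (F j).comp (X ^ p) * ∏ k ∈ Finset.univ.erase j, (G k).comp (X ^ p) := by
            rw [hcdef]; simp only []
            rw [Polynomial.mul_comp, Polynomial.prod_comp]
          have hprod : (∏ k, (G k).comp (X ^ p))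
              = (G j).comp (X ^ p) * ∏ k ∈ Finset.univ.erase j, (G k).comp (X ^ p) := by
            exact (Finset.mul_prod_erase _ _ (Finset.mem_univ j)).symm
          calc u (Fin.last n) * ((c j).comp (X ^ p) * Y j)
              = (u (Fin.last n) * (F j).comp (X ^ p))
                  * (∏ k ∈ Finset.univ.erase j, (G k).comp (X ^ p)) * Y j := by
                rw [hc]; ring
            _ = (u j * (G j).comp (X ^ p))
                  * (∏ k ∈ Finset.univ.erase j, (G k).comp (X ^ p)) * Y j := by
                rw [hFGrel j]
            _ = (∏ k, (G k).comp (X ^ p)) * (u j * Y j) := by rw [hprod]; ring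
        rw [Finset.sum_congr rfl fun j _ => this j, ← Finset.mul_sum, hrel0, mul_zero]
      exact (mul_eq_zero.mp hmul).resolve_left hulast
    have hcall := hli c hcsum
    have hFlast : F (Fin.last n) = G (Fin.last n) := by
      have := hFGrel (Fin.last n)
      have hcomp : (G (Fin.last n)).comp (X ^ p) = (F (Fin.last n)).comp (X ^ p) :=
        mul_left_cancel₀ hulast this
      have hp0 : 0 < p := (Fact.out (p := p.Prime)).pos
      exact (Polynomial.expand_injective hp0 (by
        rw [expand_eq_comp_X_pow, expand_eq_comp_X_pow, hcomp])).symm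
    have : c (Fin.last n) ≠ 0 := by
      rw [hcdef]
      simp only []
      apply mul_ne_zero
      · rw [hFlast]; exact hG0 _
      · exact Finset.prod_ne_zero_iff.mpr fun k _ => hG0 k
    exact this (hcall (Fin.last n))
end Aux

section DegreePart
variable {R : Type*} [CommRing R] [IsDomain R]

private lemma deriv_degree_step (f : Polynomial R) :
    degree (derivative f) + 1 ≤ degree f := by
  rcases eq_or_ne (derivative f) 0 with h | h
  · rw [h, degree_zero, WithBot.bot_add]
    exact bot_le
  · have hf : f ≠ 0 := by rintro rfl; simp at h
    have hlt := Polynomial.degree_derivative_lt hf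
    rw [Polynomial.degree_eq_natDegree h, Polynomial.degree_eq_natDegree hf] at hlt ⊢
    exact_mod_cast Nat.succ_le_of_lt (by exact_mod_cast hlt)

private lemma iter_deriv_degree (f : Polynomial R) (i : ℕ) :
    degree (derivative^[i] f) + (i : WithBot ℕ) ≤ degree f := by
  induction i with
  | zero => simp
  | succ i ih =>
    rw [Function.iterate_succ_apply']
    calc degree (derivative (derivative^[i] f)) + ((i + 1 : ℕ) : WithBot ℕ)
        = (degree (derivative (derivative^[i] f)) + 1) + (i : WithBot ℕ) := by
          push_cast; ring
      _ ≤ degree (derivative^[i] f) + (i : WithBot ℕ) :=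
          add_le_add_left (deriv_degree_step _) _
      _ ≤ degree f := ih

private lemma det_degree_bound (n : ℕ) (Y : Fin n → Polynomial R) :
    degree (Matrix.of fun i j : Fin n => derivative^[(i : ℕ)] (Y j)).det
      + ((∑ i : Fin n, (i : ℕ) : ℕ) : WithBot ℕ) ≤ ∑ j, degree (Y j) := by
  set M := Matrix.of fun i j : Fin n => derivative^[(i : ℕ)] (Y j) with hM
  rw [Matrix.det_apply]
  have key : ∀ σ : Equiv.Perm (Fin n),
      degree (Equiv.Perm.sign σ • ∏ i, M (σ i) i)
        + ((∑ i : Fin n, (i : ℕ) : ℕ) : WithBot ℕ) ≤ ∑ j, degree (Y j) := by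
    intro σ
    have h1 : degree (Equiv.Perm.sign σ • ∏ i, M (σ i) i) ≤ degree (∏ i, M (σ i) i) := by
      rcases Int.units_eq_one_or (Equiv.Perm.sign σ) with h | h <;> rw [h] <;> simp
    refine le_trans (add_le_add_left h1 _) ?_
    refine le_trans (add_le_add_left (Polynomial.degree_prod_le _ _) _) ?_
    have h2 : ((∑ i : Fin n, (i : ℕ) : ℕ) : WithBot ℕ) = ∑ i : Fin n, ((σ i : ℕ) : WithBot ℕ) := by
      rw [Nat.cast_sum]
      exact (Equiv.sum_comp σ (fun i : Fin n => ((i : ℕ) : WithBot ℕ))).symm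
    rw [h2, ← Finset.sum_add_distrib]
    exact Finset.sum_le_sum fun i _ => iter_deriv_degree (Y i) (σ i : ℕ)
  calc degree (∑ σ : Equiv.Perm (Fin n), Equiv.Perm.sign σ • ∏ i, M (σ i) i)
        + ((∑ i : Fin n, (i : ℕ) : ℕ) : WithBot ℕ)
      ≤ (Finset.univ.sup fun σ : Equiv.Perm (Fin n) =>
          degree (Equiv.Perm.sign σ • ∏ i, M (σ i) i))
        + ((∑ i : Fin n, (i : ℕ) : ℕ) : WithBot ℕ) :=
        add_le_add_left (Polynomial.degree_sum_le _ _) _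
    _ ≤ ∑ j, degree (Y j) := by
        rcases Finset.exists_mem_eq_sup Finset.univ ⟨1, Finset.mem_univ 1⟩
          (fun σ : Equiv.Perm (Fin n) => degree (Equiv.Perm.sign σ • ∏ i, M (σ i) i)) with ⟨σ, _, hσ⟩
        rw [hσ]
        exact key σ
end DegreePart

section RootPart
variable {K : Type*} [Field K]

-- (a) full multiplicity preserved when p ∣ e
private lemma dvd_iter_deriv_of_char_dvd {p : ℕ} [CharP K p] {r : K} {e : ℕ} (he : p ∣ e) :
    ∀ (Z : Polynomial K), (X - C r) ^ e ∣ Z → ∀ i, (X - C r) ^ e ∣ derivative^[i] Z := by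
  have hstep : ∀ Z : Polynomial K, (X - C r) ^ e ∣ Z → (X - C r) ^ e ∣ derivative Z := by
    rintro Z ⟨g, rfl⟩
    rw [derivative_mul, derivative_pow, derivative_sub, derivative_X, derivative_C, sub_zero]
    have : (C (e : K)) = 0 := by
      rw [(CharP.cast_eq_zero_iff K p e).mpr he, map_zero]
    rw [this]
    ring_nf
    exact ⟨derivative g, by ring⟩
  intro Z hZ i
  induction i with
  | zero => exact hZ
  | succ i ih => rw [Function.iterate_succ_apply']; exact hstep _ ih

-- (b) multiplicity drops by at most one with each derivative
private lemma dvd_iter_deriv_sub {r : K} :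
    ∀ (e : ℕ) (Z : Polynomial K), (X - C r) ^ e ∣ Z → ∀ i, (X - C r) ^ (e - i) ∣ derivative^[i] Z := by
  have hstep : ∀ (e : ℕ) (Z : Polynomial K), (X - C r) ^ e ∣ Z →
      (X - C r) ^ (e - 1) ∣ derivative Z := by
    rintro e Z ⟨g, rfl⟩
    rw [derivative_mul, derivative_pow, derivative_sub, derivative_X, derivative_C, sub_zero]
    refine dvd_add ⟨C (e : K) * 1 * g, by ring⟩ ((pow_dvd_pow _ (Nat.sub_le e 1)).mul_right _)
  intro e Z hZ i
  induction i generalizing e Z with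
  | zero => simpa using hZ
  | succ i ih =>
    rw [Function.iterate_succ_apply]
    have := ih (e - 1) (derivative Z) (hstep e Z hZ)
    simpa [Nat.sub_sub, add_comm] using this

-- product of columnwise divisors divides the determinant
private lemma prod_dvd_det {n : ℕ} (A : Matrix (Fin n) (Fin n) (Polynomial K))
    (v : Fin n → Polynomial K) (h : ∀ i j, v j ∣ A i j) : (∏ j, v j) ∣ A.det := by
  choose B hB using fun i j => h i j
  have : A = (Matrix.of fun i j => v i * (Matrix.of fun i j => B j i) i j)ᵀ := by
    ext i j; simp [hB i j, mul_comm]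
  rw [this, Matrix.det_transpose, Matrix.det_mul_column]
  exact Dvd.intro _ rfl

-- determinant after replacing a column by a sum of all columns
private lemma det_updateCol_sum_columns {n : ℕ} {R : Type*} [CommRing R]
    (A : Matrix (Fin n) (Fin n) R) (k : Fin n) :
    (A.updateCol k (fun i => ∑ j, A i j)).det = A.det := by
  have expand : ∀ (s : Finset (Fin n)),
      (A.updateCol k (fun i => ∑ j ∈ s, A i j)).det
        = ∑ j ∈ s, (A.updateCol k (fun i => A i j)).det := by
    intro s
    induction s using Finset.induction with
    | empty =>
      simp only [Finset.sum_empty]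
      exact Matrix.det_eq_zero_of_column_eq_zero k (fun i => by simp [Matrix.updateCol_self,
        Matrix.updateCol_apply])
    | insert a s' hnot ih =>
      rw [Finset.sum_insert hnot]
      have : (fun i => ∑ j ∈ insert a s', A i j) = (fun i => A i a) + (fun i => ∑ j ∈ s', A i j) := by
        funext i; simp [Finset.sum_insert hnot]
      rw [this, Matrix.det_updateCol_add, ih]
  rw [expand Finset.univ]
  rw [Finset.sum_eq_single k (fun j _ hj => Matrix.det_updateCol_eq_zero hj)
    (fun h => absurd (Finset.mem_univ k) h)]
  congr 1
  exact Matrix.updateCol_eq_self A k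
end RootPart



private lemma count_sum_le {K : Type*} [DecidableEq K] (S : Finset K) (M : Multiset K) :
    ∑ r ∈ S, M.count r ≤ Multiset.card M := by
  calc ∑ r ∈ S, M.count r = ∑ r ∈ S ∩ M.toFinset, M.count r := by
        refine (Finset.sum_subset (Finset.inter_subset_left) ?_).symm
        intro r hrS hrn
        rw [Finset.mem_inter] at hrn
        push_neg at hrn
        have := hrn hrS
        rw [Multiset.mem_toFinset] at this
        exact Multiset.count_eq_zero_of_notMem this
    _ ≤ ∑ r ∈ M.toFinset, M.count r :=
        Finset.sum_le_sum_of_subset Finset.inter_subset_right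
    _ = Multiset.card M := Multiset.toFinset_sum_count_eq M

private lemma sum_rootMult_eq_natDegree {K : Type*} [Field K] [IsAlgClosed K]
    (Z : Polynomial K) (hZ : Z ≠ 0) (S : Finset K) (hsub : Z.roots.toFinset ⊆ S) :
    ∑ r ∈ S, rootMultiplicity r Z = Z.natDegree := by
  have h1 : ∑ r ∈ S, rootMultiplicity r Z = ∑ r ∈ Z.roots.toFinset, rootMultiplicity r Z := by
    refine (Finset.sum_subset hsub ?_).symm
    intro r _ hrn
    rw [Multiset.mem_toFinset, Polynomial.mem_roots hZ] at hrn
    exact Polynomial.rootMultiplicity_eq_zero hrn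
  rw [h1]
  have h2 : ∀ r ∈ Z.roots.toFinset, rootMultiplicity r Z = Z.roots.count r :=
    fun r _ => (Polynomial.count_roots Z).symm
  rw [Finset.sum_congr rfl h2, Multiset.toFinset_sum_count_eq]
  exact (Polynomial.splits_iff_card_roots.mp (IsAlgClosed.splits Z))

private lemma iter_deriv_sum {K : Type*} [Field K] {ι : Type*} (s : Finset ι)
    (f : ι → Polynomial K) (i : ℕ) :
    derivative^[i] (∑ j ∈ s, f j) = ∑ j ∈ s, derivative^[i] (f j) := by
  induction i with
  | zero => rfl
  | succ i ih =>
    rw [Function.iterate_succ_apply', ih, derivative_sum]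
    exact Finset.sum_congr rfl fun j _ => (Function.iterate_succ_apply' _ _ _).symm

private lemma dvd_map_finset_gcd {p : ℕ} [Fact p.Prime] {K : Type*} [Field K]
    (φ : ZMod p →+* K) {ι : Type*} (s : Finset ι) (f : ι → Polynomial (ZMod p))
    (q : Polynomial K) (h : ∀ j ∈ s, q ∣ (f j).map φ) : q ∣ (s.gcd f).map φ := by
  induction s using Finset.induction with
  | empty => simp [Finset.gcd_empty]
  | insert a s' hnot ih =>
    rw [Finset.gcd_insert]
    obtain ⟨u, v, huv⟩ := exists_gcd_eq_mul_add_mul (f a) (s'.gcd f)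
    rw [huv]
    rw [Polynomial.map_add, Polynomial.map_mul, Polynomial.map_mul]
    exact dvd_add ((h a (Finset.mem_insert_self a s')).mul_right _)
      ((ih fun j hj => h j (Finset.mem_insert_of_mem hj)).mul_right _)

private lemma rho_col_dvd {K : Type*} [Field K] {p m : ℕ} [CharP K p] (r : K) (Z : Polynomial K)
    (i : ℕ) (hi : i ≤ m - 1) :
    (X - C r) ^ (if p ∣ rootMultiplicity r Z then rootMultiplicity r Z
      else rootMultiplicity r Z - (m - 1)) ∣ derivative^[i] Z := by
  by_cases hdvd : p ∣ rootMultiplicity r Z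
  · rw [if_pos hdvd]
    exact dvd_iter_deriv_of_char_dvd hdvd Z (Polynomial.pow_rootMultiplicity_dvd Z r) i
  · rw [if_neg hdvd]
    exact (pow_dvd_pow _ (Nat.sub_le_sub_left hi _)).trans
      (dvd_iter_deriv_sub _ Z (Polynomial.pow_rootMultiplicity_dvd Z r) i)

/-- `ν(Y)`: the number of distinct roots of `Y` (in an algebraic closure of `F_p`)
whose multiplicity is not divisible by `p`. -/
noncomputable def nuCount (p : ℕ) [Fact p.Prime] (Y : Polynomial (ZMod p)) : ℕ :=
  ((Y.map (algebraMap (ZMod p) (AlgebraicClosure (ZMod p)))).roots.toFinset.filter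
    fun r =>
      ¬ p ∣ (Y.map (algebraMap (ZMod p) (AlgebraicClosure (ZMod p)))).rootMultiplicity r).card

/-- Mason–Stothers variant over `F_p` (Vaserstein): if `Y_0 = Y_1 + … + Y_m`,
`gcd(Y_0,…,Y_m) = 1`, and `Y_1,…,Y_m` are linearly independent over `F_p(x^p)`
(stated, after clearing denominators, as: no nontrivial polynomial relation
`Σ_j c_j(x^p) Y_j = 0`), then
`deg Y_0 ≤ -C(m,2) + (m-1)·Σ_{j=0}^m ν(Y_j)`. -/
theorem mason_stothers_variant (p m : ℕ) [Fact p.Prime] (hm : 2 ≤ m)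
    (Y0 : Polynomial (ZMod p)) (Y : Fin m → Polynomial (ZMod p))
    (hsum : Y0 = ∑ j, Y j)
    (hgcd : gcd Y0 (Finset.univ.gcd Y) = 1)
    (hli : ∀ c : Fin m → Polynomial (ZMod p),
      (∑ j, (c j).comp (Polynomial.X ^ p) * Y j) = 0 → ∀ j, c j = 0) :
    Y0.natDegree + m * (m - 1) / 2 ≤
      (m - 1) * (nuCount p Y0 + ∑ j, nuCount p (Y j)) := by
  classical
  -- non-vanishing
  have hYj : ∀ j, Y j ≠ 0 := by
    intro j hj
    have h1 : (∑ k, ((fun k => if k = j then (1 : Polynomial (ZMod p)) else 0) k).comp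
        (X ^ p) * Y k) = 0 := by
      rw [Finset.sum_eq_single j]
      · simp [hj]
      · intro k _ hk; simp [hk]
      · intro h; exact absurd (Finset.mem_univ j) h
    have := hli _ h1 j
    simp at this
  have hY0 : Y0 ≠ 0 := by
    intro h0
    have h1 : (∑ k, ((fun _ => (1 : Polynomial (ZMod p))) k).comp (X ^ p) * Y k) = 0 := by
      simp only [Polynomial.one_comp, one_mul]
      rw [← hsum]; exact h0
    have := hli _ h1 ⟨0, by omega⟩
    simp at this
  -- Wronskian over F_p
  set W := (Matrix.of fun i j : Fin m => derivative^[(i : ℕ)] (Y j)).det with hWdef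
  have hW : W ≠ 0 := wronskian_ne_zero m Y hli
  have hdegW : W.natDegree + (∑ i : Fin m, (i : ℕ)) ≤ ∑ j, (Y j).natDegree := by
    have h := det_degree_bound m Y
    rw [← hWdef, Polynomial.degree_eq_natDegree hW] at h
    have h2 : ∑ j, degree (Y j) = ((∑ j, (Y j).natDegree : ℕ) : WithBot ℕ) := by
      rw [Nat.cast_sum]
      exact Finset.sum_congr rfl fun j _ => Polynomial.degree_eq_natDegree (hYj j)
    rw [h2] at h
    exact_mod_cast h
  -- move to the algebraic closure
  set K := AlgebraicClosure (ZMod p) with hK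
  set φ := algebraMap (ZMod p) K with hφ
  haveI : CharP K p := charP_of_injective_algebraMap (algebraMap (ZMod p) K).injective p
  set Z0 : Polynomial K := Y0.map φ with hZ0def
  set Z : Fin m → Polynomial K := fun j => (Y j).map φ with hZdef
  have hZ0 : Z0 ≠ 0 := Polynomial.map_ne_zero hY0
  have hZj : ∀ j, Z j ≠ 0 := fun j => Polynomial.map_ne_zero (hYj j)
  have hsumZ : Z0 = ∑ j, Z j := by
    rw [hZ0def, hsum, ← Polynomial.coe_mapRingHom, map_sum]
    rfl
  set W' := (Matrix.of fun i j : Fin m => derivative^[(i : ℕ)] (Z j)).det with hW'def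
  have hW'W : W' = W.map φ := by
    have h := RingHom.map_det (Polynomial.mapRingHom φ)
      (Matrix.of fun i j : Fin m => derivative^[(i : ℕ)] (Y j))
    have hmap : ((Polynomial.mapRingHom φ).mapMatrix
        (Matrix.of fun i j : Fin m => derivative^[(i : ℕ)] (Y j)))
        = Matrix.of fun i j : Fin m => derivative^[(i : ℕ)] (Z j) := by
      refine Matrix.ext fun i j => ?_
      simp only [RingHom.mapMatrix_apply, Matrix.map_apply, Matrix.of_apply,
        Polynomial.coe_mapRingHom]
      exact (iter_deriv_comm φ (Y j) i).symm
    rw [hmap] at h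
    rw [hW'def, ← h, Polynomial.coe_mapRingHom, hWdef]
  have hW' : W' ≠ 0 := by rw [hW'W]; exact Polynomial.map_ne_zero hW
  have hdegW'2 : W'.natDegree = W.natDegree := by rw [hW'W]; exact Polynomial.natDegree_map φ
  set ρ : ℕ → ℕ := fun e => if p ∣ e then e else e - (m - 1) with hρ
  set e0 : K → ℕ := fun r => rootMultiplicity r Z0 with he0
  set eZ : Fin m → K → ℕ := fun j r => rootMultiplicity r (Z j) with heZ
  -- no common root
  have hnoroot : ∀ r : K, ∃ j, eZ j r = 0 := by
    intro r
    by_contra hc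
    push_neg at hc
    have hroot : ∀ j, (X - C r) ∣ Z j := fun j => Polynomial.dvd_iff_isRoot.mpr
      ((Polynomial.rootMultiplicity_pos (hZj j)).mp (Nat.pos_of_ne_zero (hc j)))
    have hroot0 : (X - C r) ∣ Z0 := hsumZ ▸ Finset.dvd_sum fun j _ => hroot j
    have hG : (X - C r) ∣ (Finset.univ.gcd Y).map φ :=
      dvd_map_finset_gcd φ Finset.univ Y _ (fun j _ => hroot j)
    have hcop : IsCoprime Y0 (Finset.univ.gcd Y) := by
      apply (gcd_isUnit_iff _ _).mp
      rw [hgcd]; exact isUnit_one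
    obtain ⟨a, b, hab⟩ := hcop.map (Polynomial.mapRingHom φ)
    simp only [Polynomial.coe_mapRingHom] at hab
    have : (X - C r) ∣ 1 := by
      rw [← hab]
      exact dvd_add (hroot0.mul_left a) (hG.mul_left b)
    exact Polynomial.not_isUnit_X_sub_C r (isUnit_of_dvd_one this)
  -- key local inequality at each point
  have key1 : ∀ r : K, ρ (e0 r) + ∑ j, ρ (eZ j r) ≤ rootMultiplicity r W' := by
    intro r
    obtain ⟨j0, hj0⟩ := hnoroot r
    set A := (Matrix.of fun i j : Fin m => derivative^[(i : ℕ)] (Z j)) with hA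
    set B := A.updateCol j0 (fun i : Fin m => derivative^[(i : ℕ)] Z0) with hB
    have hdetB : B.det = W' := by
      have hcolsum : (fun i : Fin m => derivative^[(i : ℕ)] Z0) = fun i => ∑ j, A i j := by
        funext i
        rw [hsumZ, iter_deriv_sum]
        rfl
      rw [hB, hcolsum]
      exact det_updateCol_sum_columns A j0
    set w : Fin m → ℕ := fun j => if j = j0 then ρ (e0 r) else ρ (eZ j r) with hw
    have hilt : ∀ i : Fin m, (i : ℕ) ≤ m - 1 := fun i => by omega
    have hdvd : ∀ i j, (X - C r) ^ (w j) ∣ B i j := by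
      intro i j
      by_cases h : j = j0
      · subst h
        rw [hw]
        simp only [if_pos rfl]
        rw [hB, Matrix.updateCol_self]
        exact rho_col_dvd (m := m) r Z0 i (hilt i)
      · rw [hw]
        simp only [if_neg h]
        rw [hB, Matrix.updateCol_ne h]
        exact rho_col_dvd (m := m) r (Z j) i (hilt i)
    have hprod := prod_dvd_det B _ hdvd
    rw [Finset.prod_pow_eq_pow_sum] at hprod
    have hj0z : ρ (eZ j0 r) = 0 := by rw [hj0]; simp [hρ]
    have hsumw : ∑ j, w j = ρ (e0 r) + ∑ j, ρ (eZ j r) := by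
      have hwj : ∀ j, w j = (if j = j0 then ρ (e0 r) else 0) + ρ (eZ j r) := by
        intro j
        rw [hw]
        by_cases h : j = j0
        · subst h; simp [hj0z]
        · simp [h]
      rw [Finset.sum_congr rfl fun j _ => hwj j, Finset.sum_add_distrib,
        Finset.sum_ite_eq' Finset.univ j0 (fun _ => ρ (e0 r))]
      simp
    rw [hsumw, hdetB] at hprod
    exact (Polynomial.le_rootMultiplicity_iff hW').mpr hprod
  -- the finite set of relevant roots
  set S : Finset K := Z0.roots.toFinset ∪ Finset.univ.biUnion (fun j => (Z j).roots.toFinset)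
    with hS
  have hS0 : Z0.roots.toFinset ⊆ S := Finset.subset_union_left
  have hSj : ∀ j, (Z j).roots.toFinset ⊆ S := by
    intro j
    rw [hS]
    exact (Finset.subset_biUnion_of_mem (fun j => (Z j).roots.toFinset) (Finset.mem_univ j)).trans Finset.subset_union_right
  have key2 : ∑ r ∈ S, rootMultiplicity r W' ≤ W'.natDegree := by
    calc ∑ r ∈ S, rootMultiplicity r W' = ∑ r ∈ S, W'.roots.count r :=
          Finset.sum_congr rfl fun r _ => (Polynomial.count_roots W').symm
      _ ≤ Multiset.card W'.roots := count_sum_le S W'.roots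
      _ ≤ W'.natDegree := Polynomial.card_roots' W'
  -- per-polynomial degree/count bound
  have keyP : ∀ ZZ : Polynomial K, ZZ ≠ 0 → ZZ.roots.toFinset ⊆ S →
      ZZ.natDegree ≤ (∑ r ∈ S, ρ (rootMultiplicity r ZZ))
        + (m - 1) * (ZZ.roots.toFinset.filter fun r => ¬ p ∣ rootMultiplicity r ZZ).card := by
    intro ZZ hZZ hsub
    set ν : Finset K := ZZ.roots.toFinset.filter fun r => ¬ p ∣ rootMultiplicity r ZZ with hν
    have hνS : ν ⊆ S := (Finset.filter_subset _ _).trans hsub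
    have hpt : ∀ r ∈ S, rootMultiplicity r ZZ ≤ ρ (rootMultiplicity r ZZ)
        + (m - 1) * (if r ∈ ν then 1 else 0) := by
      intro r _
      by_cases hdvd : p ∣ rootMultiplicity r ZZ
      · rw [hρ]; simp [hdvd]
      · have hel : 0 < rootMultiplicity r ZZ :=
          Nat.pos_of_ne_zero (fun h => hdvd (h ▸ dvd_zero p))
        have hmem : r ∈ ν := by
          rw [hν, Finset.mem_filter, Multiset.mem_toFinset, Polynomial.mem_roots hZZ]
          exact ⟨(Polynomial.rootMultiplicity_pos hZZ).mp hel, hdvd⟩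
        rw [if_pos hmem, mul_one, hρ]
        simp only [if_neg hdvd]
        exact le_tsub_add
    calc ZZ.natDegree = ∑ r ∈ S, rootMultiplicity r ZZ :=
          (sum_rootMult_eq_natDegree ZZ hZZ S hsub).symm
      _ ≤ ∑ r ∈ S, (ρ (rootMultiplicity r ZZ) + (m - 1) * (if r ∈ ν then 1 else 0)) :=
          Finset.sum_le_sum hpt
      _ = (∑ r ∈ S, ρ (rootMultiplicity r ZZ))
            + (m - 1) * ∑ r ∈ S, (if r ∈ ν then 1 else 0) := by
          rw [Finset.sum_add_distrib, Finset.mul_sum]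
      _ = (∑ r ∈ S, ρ (rootMultiplicity r ZZ)) + (m - 1) * ν.card := by
          congr 1
          congr 1
          rw [Finset.sum_boole, Finset.filter_mem_eq_inter, Finset.inter_eq_right.mpr hνS]
          simp
  -- identify nuCount
  have hnu0 : nuCount p Y0 = (Z0.roots.toFinset.filter fun r => ¬ p ∣ rootMultiplicity r Z0).card := by
    rfl
  have hnuj : ∀ j, nuCount p (Y j)
      = ((Z j).roots.toFinset.filter fun r => ¬ p ∣ rootMultiplicity r (Z j)).card := by
    intro j; rfl
  -- assemble
  have h10 : Y0.natDegree ≤ (∑ r ∈ S, ρ (e0 r)) + (m - 1) * nuCount p Y0 := by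
    have := keyP Z0 hZ0 hS0
    rw [← hnu0] at this
    have hd : Y0.natDegree = Z0.natDegree := (Polynomial.natDegree_map φ).symm
    rw [hd]
    exact this
  have h1j : ∀ j, (Y j).natDegree ≤ (∑ r ∈ S, ρ (eZ j r)) + (m - 1) * nuCount p (Y j) := by
    intro j
    have := keyP (Z j) (hZj j) (hSj j)
    rw [← hnuj j] at this
    have hd : (Y j).natDegree = (Z j).natDegree := (Polynomial.natDegree_map φ).symm
    rw [hd]
    exact this
  have h3 : (∑ r ∈ S, ρ (e0 r)) + ∑ j, ∑ r ∈ S, ρ (eZ j r) ≤ W'.natDegree := by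
    calc (∑ r ∈ S, ρ (e0 r)) + ∑ j, ∑ r ∈ S, ρ (eZ j r)
        = ∑ r ∈ S, (ρ (e0 r) + ∑ j, ρ (eZ j r)) := by
          rw [Finset.sum_add_distrib, Finset.sum_comm]
      _ ≤ ∑ r ∈ S, rootMultiplicity r W' := Finset.sum_le_sum fun r _ => key1 r
      _ ≤ W'.natDegree := key2
  have hsum1j : ∑ j, (Y j).natDegree
      ≤ (∑ j, ∑ r ∈ S, ρ (eZ j r)) + (m - 1) * ∑ j, nuCount p (Y j) := by
    calc ∑ j, (Y j).natDegree
        ≤ ∑ j, ((∑ r ∈ S, ρ (eZ j r)) + (m - 1) * nuCount p (Y j)) :=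
          Finset.sum_le_sum fun j _ => h1j j
      _ = (∑ j, ∑ r ∈ S, ρ (eZ j r)) + (m - 1) * ∑ j, nuCount p (Y j) := by
          rw [Finset.sum_add_distrib, Finset.mul_sum]
  have hC : (∑ i : Fin m, (i : ℕ)) = m * (m - 1) / 2 := by
    rw [Fin.sum_univ_eq_sum_range (fun i => i) m]
    exact Finset.sum_range_id m
  -- final arithmetic
  have hfin : W'.natDegree + m * (m - 1) / 2 ≤ ∑ j, (Y j).natDegree := by
    rw [hdegW'2, ← hC]; exact hdegW
  set a := ∑ j, (Y j).natDegree
  set b := ∑ j, ∑ r ∈ S, ρ (eZ j r)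
  set A0 := ∑ r ∈ S, ρ (e0 r)
  set P := (m - 1) * nuCount p Y0
  set Q := (m - 1) * ∑ j, nuCount p (Y j)
  have hgoal : (m - 1) * (nuCount p Y0 + ∑ j, nuCount p (Y j)) = P + Q := by
    rw [Nat.mul_add]
  rw [hgoal]
  omega
end

section
/- Let S ⊆ F_{q^n} be an F_q-linear Sidon space and let x_1, x_2, x_3 and y_1, y_2, y_3 be elements of S with x_1, x_2, x_3 distinct and y_1, y_2, y_3 distinct. If (y_1 - y_2)(x_2 - x_3) = (y_2 - y_3)(x_1 - x_2), then there exists a nonzero λ ∈ F_q such that λ(y_1 - y_2) = y_2 - y_3 or λ(y_1 - y_2) = x_1 - x_2. -/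
/-- An `F`-linear subspace `S` of `K` is a *Sidon space* if whenever nonzero
`a, b, c, d ∈ S` satisfy `ab = cd`, we have `{aF, bF} = {cF, dF}` as sets of
one-dimensional `F`-subspaces. -/
def IsSidonSpace (F : Type*) {K : Type*} [Field F] [Field K] [Algebra F K]
    (S : Submodule F K) : Prop :=
  ∀ a b c d : K, a ∈ S → b ∈ S → c ∈ S → d ∈ S →
    a ≠ 0 → b ≠ 0 → c ≠ 0 → d ≠ 0 → a * b = c * d →
    ({Submodule.span F {a}, Submodule.span F {b}} : Set (Submodule F K)) =
      {Submodule.span F {c}, Submodule.span F {d}}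

theorem IsSidonSpace.exists_smul_eq {F K : Type*} [Field F] [Field K] [Algebra F K]
    {S : Submodule F K} (hS : IsSidonSpace F S) {a b c d : K}
    (ha : a ∈ S) (hb : b ∈ S) (hc : c ∈ S) (hd : d ∈ S)
    (ha₀ : a ≠ 0) (hb₀ : b ≠ 0) (hc₀ : c ≠ 0) (hd₀ : d ≠ 0) (h : a * b = c * d) :
    ∃ lam : F, lam ≠ 0 ∧ (lam • a = c ∨ lam • a = d) := by
  have hspan : Submodule.span F {a} ∈
      ({Submodule.span F {c}, Submodule.span F {d}} : Set (Submodule F K)) :=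
    hS a b c d ha hb hc hd ha₀ hb₀ hc₀ hd₀ h ▸ Set.mem_insert _ _
  rcases hspan with hac | had
  · obtain ⟨u, hu⟩ := Submodule.span_singleton_eq_span_singleton.mp hac
    exact ⟨u, u.ne_zero, Or.inl hu⟩
  · obtain ⟨u, hu⟩ := Submodule.span_singleton_eq_span_singleton.mp had
    exact ⟨u, u.ne_zero, Or.inr hu⟩

/-- If `x_1,x_2,x_3` and `y_1,y_2,y_3` are elements of a Sidon space `S`, each triple
consisting of distinct elements, and `(y_1-y_2)(x_2-x_3) = (y_2-y_3)(x_1-x_2)`, then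
there is a nonzero `λ ∈ F` with `λ(y_1-y_2) = y_2-y_3` or `λ(y_1-y_2) = x_1-x_2`. -/
theorem sidon_space_scalar_relation {F K : Type*} [Field F] [Field K] [Algebra F K]
    (S : Submodule F K) (hS : IsSidonSpace F S)
    (x1 x2 x3 y1 y2 y3 : K)
    (hx1 : x1 ∈ S) (hx2 : x2 ∈ S) (hx3 : x3 ∈ S)
    (hy1 : y1 ∈ S) (hy2 : y2 ∈ S) (hy3 : y3 ∈ S)
    (hxd : x1 ≠ x2 ∧ x1 ≠ x3 ∧ x2 ≠ x3)
    (hyd : y1 ≠ y2 ∧ y1 ≠ y3 ∧ y2 ≠ y3)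
    (heq : (y1 - y2) * (x2 - x3) = (y2 - y3) * (x1 - x2)) :
    ∃ lam : F, lam ≠ 0 ∧
      (lam • (y1 - y2) = y2 - y3 ∨ lam • (y1 - y2) = x1 - x2) :=
  hS.exists_smul_eq (S.sub_mem hy1 hy2) (S.sub_mem hx2 hx3) (S.sub_mem hy2 hy3)
    (S.sub_mem hx1 hx2) (sub_ne_zero.mpr hyd.1) (sub_ne_zero.mpr hxd.2.2)
    (sub_ne_zero.mpr hyd.2.2) (sub_ne_zero.mpr hxd.1) heq
end

section
/- For every m ≥ 1 and every prime power q ≥ 3, there exists γ ∈ F_{q^{2m}} such that S = {u + u^q · γ : u ∈ F_{q^m}} is an m-dimensional Sidon space over F_q in F_{q^{2m}}. -/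
/-!
Take for `γ` a generator of `Kˣ` and put `Q = |M|`. Then `γ ∉ M`, so elements of `K` have
unique coordinates in the basis `1, γ` over `M`, and `γ² = θγ - ν` with `θ = γ^Q + γ` and
`ν = γ^(Q+1)` in `M`. The element `ν` generates `Mˣ`, so it is not a `(q-1)`-th power when `q ≥ 3`.

Writing `φ u = u + u^q γ`, the constant coordinate of `φ u * φ v` is `uv - ν (uv)^q`. The
`F`-linear map `w ↦ w - ν w^q` is injective, since `w = ν w^q` with `w ≠ 0` gives
`ν = (w⁻¹)^(q-1)`; so `φ u * φ v = φ s * φ t` forces `uv = st`. The `γ`-coordinate then gives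
`u^(q-1) + v^(q-1) = s^(q-1) + t^(q-1)`, hence `{u^(q-1), v^(q-1)} = {s^(q-1), t^(q-1)}`, and
`x^(q-1) = y^(q-1)` means `x / y ∈ Fˣ`.
-/

open Polynomial in
theorem mem_range_algebraMap_of_pow_card_eq {F L : Type*} [Field F] [Fintype F] [CommRing L]
    [IsDomain L] [Algebra F L] {x : L} (hx : x ^ Fintype.card F = x) :
    x ∈ Set.range (algebraMap F L) := by
  have hroots := roots_map_of_injective_of_card_eq_natDegree (algebraMap F L).injective
    (p := X ^ Fintype.card F - X) (by
      rw [FiniteField.roots_X_pow_card_sub_X,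
        FiniteField.X_pow_card_sub_X_natDegree_eq F Fintype.one_lt_card]
      rfl)
  have hx' : x ∈ ((X ^ Fintype.card F - X : F[X]).map (algebraMap F L)).roots := by
    rw [mem_roots (Polynomial.map_ne_zero
      (FiniteField.X_pow_card_sub_X_ne_zero F Fintype.one_lt_card))]
    simp [hx]
  rw [← hroots, FiniteField.roots_X_pow_card_sub_X] at hx'
  obtain ⟨a, -, rfl⟩ := Multiset.mem_map.mp hx'
  exact ⟨a, rfl⟩

theorem eq_and_eq_or_eq_and_eq_of_add_eq_of_mul_eq {R : Type*} [CommRing R] [IsDomain R]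
    {x y x' y' : R} (hs : x + y = x' + y') (hp : x * y = x' * y') :
    (x = x' ∧ y = y') ∨ (x = y' ∧ y = x') := by
  have key : (x - x') * (x - y') = 0 := by linear_combination x * hs - hp
  rcases mul_eq_zero.mp key with h | h
  · have hx : x = x' := sub_eq_zero.mp h
    exact .inl ⟨hx, by linear_combination hs - hx⟩
  · have hx : x = y' := sub_eq_zero.mp h
    exact .inr ⟨hx, by linear_combination hs - hx⟩

theorem eq_zero_of_eq_mul_pow {M : Type*} [Field M] {n : ℕ} (hn : n ≠ 0) {ν w : M}
    (hν : ∀ z : M, z ^ (n - 1) ≠ ν) (hw : w = ν * w ^ n) : w = 0 := by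
  by_contra hw0
  have h : ν * w ^ (n - 1) = 1 := by
    rw [← pow_sub_one_mul hn, ← mul_assoc] at hw
    exact mul_right_cancel₀ hw0 (by linear_combination -hw)
  refine hν w⁻¹ ?_
  rw [inv_pow]
  exact inv_eq_of_mul_eq_one_right (by linear_combination h)

theorem pow_sub_one_add_pow_sub_one_eq {M : Type*} [Field M] {n : ℕ} (hn : n ≠ 0)
    {u v s t : M} (huv0 : u * v ≠ 0) (huv : u * v = s * t)
    (h : u * v ^ n + u ^ n * v = s * t ^ n + s ^ n * t) :
    u ^ (n - 1) + v ^ (n - 1) = s ^ (n - 1) + t ^ (n - 1) := by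
  have expand : ∀ x y : M, x * y * (x ^ (n - 1) + y ^ (n - 1)) = x * y ^ n + x ^ n * y := by
    intro x y
    rw [← pow_sub_one_mul hn x, ← pow_sub_one_mul hn y]
    ring
  apply mul_left_cancel₀ huv0
  rw [expand, h, huv, expand]

theorem algebraMap_add_algebraMap_mul_eq_iff {M K : Type*} [Field M] [Field K] [Algebra M K]
    {γ : K} (hγ : γ ∉ Set.range (algebraMap M K)) {a b c d : M} :
    algebraMap M K a + algebraMap M K b * γ = algebraMap M K c + algebraMap M K d * γ ↔
      a = c ∧ b = d := by
  refine ⟨fun h => ?_, by rintro ⟨rfl, rfl⟩; rfl⟩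
  obtain rfl : b = d := by
    by_contra hbd
    refine hγ ⟨(a - c) / (d - b), ?_⟩
    have hdb : algebraMap M K d - algebraMap M K b ≠ 0 := by
      rwa [sub_ne_zero, ne_eq, (algebraMap M K).injective.eq_iff, eq_comm]
    rw [map_div₀, map_sub, map_sub, div_eq_iff hdb]
    linear_combination h
  exact ⟨(algebraMap M K).injective (add_right_cancel h), rfl⟩

theorem FiniteField.exists_isPrimitiveRoot_card_sub_one (K : Type*) [Field K] [Fintype K] :
    ∃ γ : K, IsPrimitiveRoot γ (Fintype.card K - 1) := by
  obtain ⟨g, hg⟩ := IsCyclic.exists_ofOrder_eq_natCard (α := Kˣ)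
  refine ⟨g, ?_⟩
  rw [IsPrimitiveRoot.coe_units_iff, ← Nat.card_eq_fintype_card, ← Nat.card_units, ← hg]
  exact IsPrimitiveRoot.orderOf g

theorem pow_card_pow_card_eq_self {M K : Type*} [Fintype M] [Field K] [Fintype K]
    (hK : Fintype.card K = Fintype.card M ^ 2) (x : K) :
    (x ^ Fintype.card M) ^ Fintype.card M = x := by
  rw [← pow_mul, ← sq, ← hK, FiniteField.pow_card]

section QuadraticExtension

variable {M K : Type*} [Field M] [Fintype M] [Field K] [Fintype K] [Algebra M K]

theorem pow_card_add_self_mem_range (hK : Fintype.card K = Fintype.card M ^ 2) (x : K) :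
    x ^ Fintype.card M + x ∈ Set.range (algebraMap M K) := by
  apply mem_range_algebraMap_of_pow_card_eq
  rw [← FiniteField.frobeniusAlgHom_apply, map_add, FiniteField.frobeniusAlgHom_apply,
    FiniteField.frobeniusAlgHom_apply, pow_card_pow_card_eq_self hK, add_comm]

theorem pow_card_mul_self_mem_range (hK : Fintype.card K = Fintype.card M ^ 2) (x : K) :
    x ^ Fintype.card M * x ∈ Set.range (algebraMap M K) := by
  apply mem_range_algebraMap_of_pow_card_eq
  rw [mul_pow, pow_card_pow_card_eq_self hK, mul_comm]

theorem IsPrimitiveRoot.notMem_range_algebraMap (hK : Fintype.card K = Fintype.card M ^ 2)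
    {γ : K} (hγ : IsPrimitiveRoot γ (Fintype.card K - 1)) :
    γ ∉ Set.range (algebraMap M K) := by
  rintro ⟨a, rfl⟩
  have hQ : 1 < Fintype.card M := Fintype.one_lt_card
  have ha : a ≠ 0 := by
    rintro rfl
    exact hγ.ne_zero (Nat.sub_pos_of_lt Fintype.one_lt_card).ne' (map_zero _)
  refine hγ.pow_ne_one_of_pos_of_lt (l := Fintype.card M - 1) (by omega) ?_ ?_
  · rw [hK]
    have : Fintype.card M < Fintype.card M ^ 2 := by nlinarith
    omega
  · rw [← map_pow, FiniteField.pow_card_sub_one_eq_one a ha, map_one]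

theorem IsPrimitiveRoot.pow_card_add_one_ne_pow (hK : Fintype.card K = Fintype.card M ^ 2)
    {γ : K} (hγ : IsPrimitiveRoot γ (Fintype.card K - 1)) {d : ℕ}
    (hd : d ∣ Fintype.card M - 1) (hd2 : 2 ≤ d) (w : M) :
    algebraMap M K w ^ d ≠ γ ^ (Fintype.card M + 1) := by
  intro h
  -- `γ^((Q+1)(Q-1)/d) = w^(Q-1) = 1`, with an exponent below the order `(Q+1)(Q-1)` of `γ`
  obtain ⟨e, he⟩ := hd
  have hQ : 1 < Fintype.card M := Fintype.one_lt_card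
  have hw : w ≠ 0 := by
    rintro rfl
    rw [map_zero, zero_pow (by omega)] at h
    exact pow_ne_zero _ (hγ.ne_zero (Nat.sub_pos_of_lt Fintype.one_lt_card).ne') h.symm
  have he0 : e ≠ 0 := by rintro rfl; omega
  refine hγ.pow_ne_one_of_pos_of_lt (l := (Fintype.card M + 1) * e) (by positivity) ?_ ?_
  · rw [hK]
    have hsq : Fintype.card M ^ 2 - 1 = (Fintype.card M + 1) * (d * e) := by
      rw [← he]
      simpa using Nat.sq_sub_sq (Fintype.card M) 1
    rw [hsq]
    nlinarith [Nat.pos_of_ne_zero he0]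
  · rw [pow_mul, ← h, ← pow_mul, ← he, ← map_pow, FiniteField.pow_card_sub_one_eq_one w hw,
      map_one]

end QuadraticExtension

section SidonMap

variable (F M : Type*) {K : Type*} [Field F] [Fintype F] [Field M] [Field K] [Algebra F M]
  [Algebra M K] [Algebra F K] [IsScalarTower F M K]

def sidonMap (γ : K) : M →ₗ[F] K :=
  (IsScalarTower.toAlgHom F M K).toLinearMap + LinearMap.mulRight F γ ∘ₗ
    ((IsScalarTower.toAlgHom F M K).comp (FiniteField.frobeniusAlgHom F M)).toLinearMap

variable {F M}

theorem sidonMap_apply (γ : K) (u : M) :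
    sidonMap F M γ u = algebraMap M K u + algebraMap M K (u ^ Fintype.card F) * γ :=
  rfl

theorem sidonMap_injective {γ : K} (hγ : γ ∉ Set.range (algebraMap M K)) :
    Function.Injective (sidonMap F M γ) := by
  refine (injective_iff_map_eq_zero _).mpr fun u hu => ?_
  rw [sidonMap_apply] at hu
  refine ((algebraMap_add_algebraMap_mul_eq_iff hγ (b := u ^ Fintype.card F) (c := 0)
    (d := 0)).mp ?_).1
  rw [hu, map_zero, zero_mul, add_zero]

theorem sidonMap_mul_sidonMap {γ : K} {θ ν : M}
    (hγ2 : γ ^ 2 = algebraMap M K θ * γ - algebraMap M K ν) (u v : M) :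
    sidonMap F M γ u * sidonMap F M γ v =
      algebraMap M K (u * v - ν * (u * v) ^ Fintype.card F) +
        algebraMap M K (u * v ^ Fintype.card F + u ^ Fintype.card F * v +
          θ * (u * v) ^ Fintype.card F) * γ := by
  simp only [sidonMap_apply, map_add, map_sub, map_mul, map_pow, mul_pow]
  linear_combination (algebraMap M K u) ^ Fintype.card F *
    (algebraMap M K v) ^ Fintype.card F * hγ2

theorem span_sidonMap_eq_of_pow_eq (γ : K) {x y : M} (hx : x ≠ 0) (hy : y ≠ 0)
    (h : x ^ (Fintype.card F - 1) = y ^ (Fintype.card F - 1)) :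
    Submodule.span F {sidonMap F M γ x} = Submodule.span F {sidonMap F M γ y} := by
  obtain ⟨μ, hμ⟩ : x / y ∈ Set.range (algebraMap F M) := by
    apply mem_range_algebraMap_of_pow_card_eq
    rw [← pow_sub_one_mul Fintype.card_ne_zero, div_pow, h, div_self (pow_ne_zero _ hy),
      one_mul]
  have hμ0 : μ ≠ 0 := by
    rintro rfl
    exact div_ne_zero hx hy (by rw [← hμ, map_zero])
  have hxy : x = μ • y := by rw [Algebra.smul_def, hμ, div_mul_cancel₀ x hy]
  rw [hxy, map_smul]
  exact Submodule.span_singleton_smul_eq (isUnit_iff_ne_zero.mpr hμ0) _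

theorem eq_of_sub_mul_pow_card_eq {ν : M}
    (hν : ∀ z : M, z ^ (Fintype.card F - 1) ≠ ν) {x y : M}
    (h : x - ν * x ^ Fintype.card F = y - ν * y ^ Fintype.card F) : x = y := by
  refine sub_eq_zero.mp (eq_zero_of_eq_mul_pow Fintype.card_ne_zero hν ?_)
  have hsub := map_sub (FiniteField.frobeniusAlgHom F M) x y
  simp only [FiniteField.frobeniusAlgHom_apply] at hsub
  rw [hsub]
  linear_combination h

theorem isSidonSpace_range_sidonMap {γ : K} {θ ν : M} (hγ : γ ∉ Set.range (algebraMap M K))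
    (hγ2 : γ ^ 2 = algebraMap M K θ * γ - algebraMap M K ν)
    (hν : ∀ z : M, z ^ (Fintype.card F - 1) ≠ ν) :
    IsSidonSpace F (LinearMap.range (sidonMap F M γ)) := by
  rintro _ _ _ _ ⟨u, rfl⟩ ⟨v, rfl⟩ ⟨s, rfl⟩ ⟨t, rfl⟩ hu hv hs ht h
  simp only [ne_eq, map_eq_zero_iff _ (sidonMap_injective hγ)] at hu hv hs ht
  rw [sidonMap_mul_sidonMap hγ2, sidonMap_mul_sidonMap hγ2,
    algebraMap_add_algebraMap_mul_eq_iff hγ] at h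
  obtain ⟨h₀, h₁⟩ := h
  have huv : u * v = s * t := eq_of_sub_mul_pow_card_eq hν h₀
  rw [huv, add_left_inj] at h₁
  have hsum := pow_sub_one_add_pow_sub_one_eq Fintype.card_ne_zero (mul_ne_zero hu hv) huv h₁
  have hprod : u ^ (Fintype.card F - 1) * v ^ (Fintype.card F - 1) =
      s ^ (Fintype.card F - 1) * t ^ (Fintype.card F - 1) := by
    rw [← mul_pow, ← mul_pow, huv]
  rcases eq_and_eq_or_eq_and_eq_of_add_eq_of_mul_eq hsum hprod with ⟨hus, hvt⟩ | ⟨hut, hvs⟩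
  · rw [span_sidonMap_eq_of_pow_eq γ hu hs hus, span_sidonMap_eq_of_pow_eq γ hv ht hvt]
  · rw [span_sidonMap_eq_of_pow_eq γ hu ht hut, span_sidonMap_eq_of_pow_eq γ hv hs hvs,
      Set.pair_comm]

end SidonMap

theorem exists_sidon_space_general (q m : ℕ) (hq3 : 3 ≤ q)
    (F M K : Type*) [Field F] [Field M] [Field K]
    [Fintype F] [Fintype M] [Fintype K]
    [Algebra F M] [Algebra M K] [Algebra F K] [IsScalarTower F M K]
    (hcF : Fintype.card F = q) (hcM : Fintype.card M = q ^ m)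
    (hcK : Fintype.card K = q ^ (2 * m)) :
    ∃ γ : K,
      IsSidonSpace F (Submodule.span F
        (Set.range fun u : M => algebraMap M K u + algebraMap M K (u ^ q) * γ)) ∧
      Module.finrank F (Submodule.span F
        (Set.range fun u : M => algebraMap M K u + algebraMap M K (u ^ q) * γ)) = m := by
  subst hcF
  have hK : Fintype.card K = Fintype.card M ^ 2 := by rw [hcK, hcM, ← pow_mul, mul_comm]
  obtain ⟨γ, hγ⟩ := FiniteField.exists_isPrimitiveRoot_card_sub_one K
  have hγM := hγ.notMem_range_algebraMap hK
  obtain ⟨θ, hθ⟩ := pow_card_add_self_mem_range hK γ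
  obtain ⟨ν, hν⟩ := pow_card_mul_self_mem_range hK γ
  have hγ2 : γ ^ 2 = algebraMap M K θ * γ - algebraMap M K ν := by
    rw [hθ, hν]
    ring
  have hνpow : ∀ z : M, z ^ (Fintype.card F - 1) ≠ ν := by
    intro z hz
    refine hγ.pow_card_add_one_ne_pow hK (hcM ▸ Nat.sub_one_dvd_pow_sub_one _ _) (by omega) z ?_
    rw [← map_pow, hz, hν, pow_succ]
  have hspan : Submodule.span F (Set.range fun u : M =>
      algebraMap M K u + algebraMap M K (u ^ Fintype.card F) * γ) =
      LinearMap.range (sidonMap F M γ) :=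
    Submodule.span_eq (LinearMap.range (sidonMap F M γ))
  refine ⟨γ, ?_⟩
  rw [hspan]
  refine ⟨isSidonSpace_range_sidonMap hγM hγ2 hνpow, ?_⟩
  rw [LinearMap.finrank_range_of_inj (sidonMap_injective hγM)]
  exact Nat.pow_right_injective (by omega : 2 ≤ Fintype.card F)
    (Module.card_eq_pow_finrank.symm.trans hcM)

/-- (Roth–Raviv–Tamo) For every `m ≥ 1` and prime power `q ≥ 3`, with
`F = F_q ⊆ M = F_{q^m} ⊆ K = F_{q^{2m}}`, there is `γ ∈ K` such that
`S = {u + u^q·γ : u ∈ M}` is an `m`-dimensional Sidon space over `F` in `K`. -/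
theorem exists_sidon_space (q m : ℕ) (hm : 1 ≤ m) (hq3 : 3 ≤ q) (hq : IsPrimePow q)
    (F M K : Type*) [Field F] [Field M] [Field K]
    [Fintype F] [Fintype M] [Fintype K]
    [Algebra F M] [Algebra M K] [Algebra F K] [IsScalarTower F M K]
    (hcF : Fintype.card F = q) (hcM : Fintype.card M = q ^ m)
    (hcK : Fintype.card K = q ^ (2 * m)) :
    ∃ γ : K,
      IsSidonSpace F (Submodule.span F
        (Set.range fun u : M => algebraMap M K u + algebraMap M K (u ^ q) * γ)) ∧
      Module.finrank F (Submodule.span F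
        (Set.range fun u : M => algebraMap M K u + algebraMap M K (u ^ q) * γ)) = m :=
  exists_sidon_space_general q m hq3 F M K hcF hcM hcK
end

section
/- Any [n,k]_q Reed–Solomon code (with distinct evaluation points, k ≥ 2) that can correct any n - 2k + 1 worst-case insertion-deletion errors must satisfy q ≥ (1/2)^{1/(k-1)} · (n / ((2k-1)(k-1)))^{(2k-1)/(k-1)}. In particular q ≥ (1/2) · (n/((2k-1)(k-1)))^{(2k-1)/(k-1)}. -/
/-!
For a non-constant `f` of degree `< k`, let `V_f ⊆ F^(2k-1)` be the set of length-`(2k-1)`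
subsequences of its codeword. Since `f` takes each value at most `k - 1` times on the distinct
evaluation points, every word arises from at most `(k-1)^(2k-1)` index sets, so
`|V_f| ≥ C(n, 2k-1) / (k-1)^(2k-1)`. The decoding hypothesis makes the `q^k - q` sets `V_f`
pairwise disjoint, whence `(q^k - q) C(n, 2k-1) ≤ (k-1)^(2k-1) q^(2k-1)`. Together with
`C(n, m) ≥ (n/m)^m` and `q^(2k-1) ≤ 2 q^(k-1) (q^k - q)` this gives
`(n / ((2k-1)(k-1)))^(2k-1) ≤ 2 q^(k-1)`; take `(k-1)`-th roots.
-/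

open Finset Polynomial

theorem Nat.pow_le_pow_mul_choose {m n : ℕ} (h : m ≤ n) : n ^ m ≤ m ^ m * n.choose m := by
  have key : n ^ m * m.factorial ≤ m ^ m * n.descFactorial m := by
    simp only [← Nat.descFactorial_self, Nat.descFactorial_eq_prod_range]
    have hpow (a b : ℕ) : a ^ m * ∏ i ∈ range m, (b - i) = ∏ i ∈ range m, a * (b - i) := by
      rw [prod_mul_distrib, prod_const, card_range]
    rw [hpow, hpow]
    refine prod_le_prod' fun i _ => ?_
    rw [Nat.mul_sub, Nat.mul_sub, mul_comm n m]
    exact Nat.sub_le_sub_left (Nat.mul_le_mul_right i h) _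
  rw [Nat.descFactorial_eq_factorial_mul_choose, mul_left_comm] at key
  exact Nat.le_of_mul_le_mul_right (by linarith) m.factorial_pos

theorem Nat.card_fin_orderEmbedding (m n : ℕ) : Nat.card (Fin m ↪o Fin n) = n.choose m := by
  rw [Nat.card_congr Set.powersetCard.ofFinEmbEquiv, Set.powersetCard.card, Nat.card_fin]

theorem List.ofFn_comp_sublist {γ : Type*} {m n : ℕ} (g : Fin n → γ) (s : Fin m ↪o Fin n) :
    (List.ofFn (g ∘ s)).Sublist (List.ofFn g) := by
  rw [List.sublist_iff_exists_fin_orderEmbedding_get_eq]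
  exact ⟨(Fin.castOrderIso (by simp)).toOrderEmbedding.trans
    (s.trans (Fin.castOrderIso (by simp)).toOrderEmbedding), fun i => by simp [Fin.cast]⟩

section Subsequences

variable {γ : Type*} [Fintype γ] [DecidableEq γ]

def subseqWords (m : ℕ) (x : List γ) : Finset (Fin m → γ) :=
  {w | (List.ofFn w).Sublist x}

theorem choose_le_pow_mul_card_subseqWords {n m d : ℕ} (g : Fin n → γ)
    (hg : ∀ c, #{i | g i = c} ≤ d) :
    n.choose m ≤ d ^ m * #(subseqWords m (List.ofFn g)) := by
  have := Fintype.ofFinite (Fin m ↪o Fin n)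
  rw [← Nat.card_fin_orderEmbedding, Nat.card_eq_fintype_card, ← card_univ]
  refine card_le_mul_card_image_of_maps_to (f := fun s : Fin m ↪o Fin n => g ∘ s)
    (fun s _ => by simpa [subseqWords] using List.ofFn_comp_sublist g s) _ fun w _ => ?_
  calc #{s : Fin m ↪o Fin n | g ∘ s = w}
      ≤ #(Fintype.piFinset fun j => ({i | g i = w j} : Finset (Fin n))) :=
        card_le_card_of_injOn (fun s : Fin m ↪o Fin n => (s : Fin m → Fin n))
          (fun s hs => by simp_all [← funext_iff, Function.comp_def])
          DFunLike.coe_injective.injOn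
    _ ≤ d ^ m := by
        rw [Fintype.card_piFinset]
        exact (prod_le_prod' fun j _ => hg (w j)).trans_eq (by simp)

end Subsequences

theorem Polynomial.card_filter_eval_eq_le_natDegree {R ι : Type*} [CommRing R] [IsDomain R]
    [DecidableEq R] [Fintype ι] {α : ι → R} (hα : Function.Injective α) {f : R[X]}
    (hf : 0 < f.natDegree) (c : R) : #{i | f.eval (α i) = c} ≤ f.natDegree := by
  have hne : f - C c ≠ 0 := fun h => by
    rw [sub_eq_zero.mp h, natDegree_C] at hf; exact hf.false
  rw [← natDegree_sub_C (a := c), ← card_image_of_injective _ hα]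
  refine card_le_degree_of_subset_roots fun x hx => ?_
  obtain ⟨i, hi, rfl⟩ := mem_image.mp hx
  simp_all

theorem Polynomial.exists_finset_nonconstant_natDegree_lt (R : Type*) [Semiring R] [Fintype R]
    (k : ℕ) : ∃ P : Finset R[X], Fintype.card R ^ k - Fintype.card R ≤ #P ∧
      ∀ f ∈ P, 0 < f.natDegree ∧ f.natDegree < k := by
  classical
  let A : Finset R[X] := univ.image fun a : Fin k → R => ((degreeLTEquiv R k).symm a : R[X])
  have hA : #A = Fintype.card R ^ k :=
    (card_image_of_injective _ (Subtype.val_injective.comp (degreeLTEquiv R k).symm.injective)).trans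
      (by simp)
  have hconst : #{f ∈ A | ¬ 0 < f.natDegree} ≤ Fintype.card R :=
    calc _ ≤ #(univ.image (C : R → R[X])) := card_le_card fun f hf => by
            rw [mem_filter, not_lt, Nat.le_zero] at hf
            exact mem_image.2 ⟨_, mem_univ _, (eq_C_of_natDegree_eq_zero hf.2).symm⟩
      _ ≤ Fintype.card R := card_image_le
  refine ⟨{f ∈ A | 0 < f.natDegree}, ?_, fun f hf => ?_⟩
  · have := card_filter_add_card_filter_not (s := A) (fun f => 0 < f.natDegree)
    omega
  · obtain ⟨hfA, hf0⟩ := mem_filter.1 hf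
    obtain ⟨a, -, rfl⟩ := mem_image.1 hfA
    exact ⟨hf0, (natDegree_lt_iff_degree_lt (ne_zero_of_natDegree_gt hf0)).2
      (mem_degreeLT.1 (Subtype.prop _))⟩

theorem card_mul_choose_le_of_lcs_lt {R : Type*} [CommRing R] [IsDomain R] [Fintype R]
    [DecidableEq R] {n m d : ℕ} {α : Fin n → R} (hα : Function.Injective α) {P : Finset R[X]}
    (hdeg : ∀ f ∈ P, 0 < f.natDegree ∧ f.natDegree ≤ d)
    (hlcs : ∀ f ∈ P, ∀ g ∈ P, f ≠ g → ∀ u : List R,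
      u.Sublist (List.ofFn fun i => f.eval (α i)) →
        u.Sublist (List.ofFn fun i => g.eval (α i)) → u.length < m) :
    #P * n.choose m ≤ d ^ m * Fintype.card R ^ m := by
  set V := fun f : R[X] => subseqWords m (List.ofFn fun i => f.eval (α i))
  have hdisj : (P : Set R[X]).PairwiseDisjoint V := fun f hf g hg hfg =>
    disjoint_left.2 fun w hwf hwg => by
      simpa using hlcs f hf g hg hfg _ (mem_filter.1 hwf).2 (mem_filter.1 hwg).2
  calc #P * n.choose m ≤ ∑ f ∈ P, d ^ m * #(V f) := by
        rw [← smul_eq_mul]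
        exact card_nsmul_le_sum _ _ _ fun f hf => choose_le_pow_mul_card_subseqWords _ fun c =>
          (card_filter_eval_eq_le_natDegree hα (hdeg f hf).1 c).trans (hdeg f hf).2
    _ = d ^ m * #(P.biUnion V) := by rw [← mul_sum, card_biUnion hdisj]
    _ ≤ d ^ m * Fintype.card R ^ m :=
        Nat.mul_le_mul_left _ ((card_le_univ _).trans_eq (by simp))

theorem pow_le_two_mul_pow_mul_of_card_mul_choose_le {n k q : ℕ} (hk : 2 ≤ k) (hq : 2 ≤ q)
    (h : (q ^ k - q) * n.choose (2 * k - 1) ≤ (k - 1) ^ (2 * k - 1) * q ^ (2 * k - 1)) :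
    n ^ (2 * k - 1) ≤ 2 * q ^ (k - 1) * ((2 * k - 1) * (k - 1)) ^ (2 * k - 1) := by
  set m := 2 * k - 1
  have hq' : 1 ≤ 2 * q ^ (k - 1) := by have := Nat.one_le_pow (k - 1) q (by omega); omega
  rcases lt_or_ge n m with hn | hn
  · calc n ^ m ≤ (m * (k - 1)) ^ m :=
          Nat.pow_le_pow_left (hn.le.trans (Nat.le_mul_of_pos_right m (by omega))) m
      _ ≤ _ := Nat.le_mul_of_pos_left _ hq'
  have hqk : q ^ k = q * q ^ (k - 1) := by rw [← pow_succ']; congr 1; omega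
  have h2q : 2 * q ≤ q ^ k := by
    rw [hqk, mul_comm 2]; exact Nat.mul_le_mul_left q (le_trans hq (Nat.le_self_pow (by omega) q))
  have hqm : q ^ m ≤ 2 * q ^ (k - 1) * (q ^ k - q) := by
    have : q ^ m = q ^ (k - 1) * q ^ k := by rw [← pow_add]; congr 1; omega
    rw [this, mul_comm 2, mul_assoc]
    exact Nat.mul_le_mul_left _ (by omega)
  refine Nat.le_of_mul_le_mul_right ?_ (show 0 < q ^ k - q by omega)
  calc n ^ m * (q ^ k - q) ≤ m ^ m * ((q ^ k - q) * n.choose m) := by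
        rw [mul_comm (q ^ k - q), ← mul_assoc]
        exact Nat.mul_le_mul_right _ (Nat.pow_le_pow_mul_choose hn)
    _ ≤ m ^ m * ((k - 1) ^ m * (2 * q ^ (k - 1) * (q ^ k - q))) :=
        Nat.mul_le_mul_left _ (h.trans (Nat.mul_le_mul_left _ hqm))
    _ = 2 * q ^ (k - 1) * (m * (k - 1)) ^ m * (q ^ k - q) := by ring

theorem div_rpow_le_two_mul_rpow_of_pow_le {n k q : ℕ} (hk : 2 ≤ k)
    (h : n ^ (2 * k - 1) ≤ 2 * q ^ (k - 1) * ((2 * k - 1) * (k - 1)) ^ (2 * k - 1)) :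
    ((n : ℝ) / ((2 * (k : ℝ) - 1) * ((k : ℝ) - 1))) ^ (2 * (k : ℝ) - 1) ≤
      2 * (q : ℝ) ^ ((k : ℝ) - 1) := by
  have hm : ((2 * k - 1 : ℕ) : ℝ) = 2 * (k : ℝ) - 1 := by
    rw [Nat.cast_sub (by omega)]; push_cast; ring
  have hk1 : ((k - 1 : ℕ) : ℝ) = (k : ℝ) - 1 := by rw [Nat.cast_sub (by omega)]; push_cast; ring
  have hD : (0 : ℝ) < ((2 * k - 1 : ℕ) : ℝ) * ((k - 1 : ℕ) : ℝ) := by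
    norm_cast; exact Nat.mul_pos (by omega) (by omega)
  rw [← hm, ← hk1, Real.rpow_natCast, Real.rpow_natCast, div_pow, div_le_iff₀ (pow_pos hD _)]
  exact_mod_cast h

theorem Real.one_div_rpow_mul_rpow_div_le {X q a c e : ℝ} (hX : 0 ≤ X) (hq : 0 ≤ q) (hc : 0 < c)
    (he : 0 < e) (h : X ^ a ≤ c * q ^ e) : (1 / c) ^ (1 / e) * X ^ (a / e) ≤ q := by
  have hroot : X ^ (a / e) ≤ c ^ (1 / e) * q := by
    calc X ^ (a / e) = (X ^ a) ^ (1 / e) := by rw [← rpow_mul hX, mul_one_div]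
      _ ≤ (c * q ^ e) ^ (1 / e) := rpow_le_rpow (rpow_nonneg hX a) h (by positivity)
      _ = c ^ (1 / e) * q := by
        rw [mul_rpow hc.le (rpow_nonneg hq e), ← rpow_mul hq, mul_one_div_cancel he.ne', rpow_one]
  calc (1 / c) ^ (1 / e) * X ^ (a / e) ≤ (1 / c) ^ (1 / e) * (c ^ (1 / e) * q) := by gcongr
    _ = q := by rw [← mul_assoc, ← mul_rpow (by positivity) hc.le, one_div_mul_cancel hc.ne',
      one_rpow, one_mul]

/-- Field size lower bound: any `[n,k]_q` RS code (distinct evaluation points,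
`k ≥ 2`) correcting any `n - 2k + 1` insdel errors (i.e. distinct codewords have
LCS at most `2k-2`) satisfies
`q ≥ (1/2)^{1/(k-1)} · (n/((2k-1)(k-1)))^{(2k-1)/(k-1)}`, and in particular
`q ≥ (1/2) · (n/((2k-1)(k-1)))^{(2k-1)/(k-1)}`. -/
theorem rs_field_size_lower_bound {F : Type*} [Field F] [Fintype F]
    (n k : ℕ) (hk : 2 ≤ k)
    (α : Fin n → F) (hα : Function.Injective α)
    (hcorr : ∀ f g : Polynomial F, f.natDegree < k → g.natDegree < k → f ≠ g →
      ∀ u : List F, u.Sublist (List.ofFn fun i => f.eval (α i)) →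
        u.Sublist (List.ofFn fun i => g.eval (α i)) → u.length ≤ 2 * k - 2) :
    ((1 : ℝ) / 2) ^ ((1 : ℝ) / ((k : ℝ) - 1)) *
        ((n : ℝ) / ((2 * (k : ℝ) - 1) * ((k : ℝ) - 1))) ^
          ((2 * (k : ℝ) - 1) / ((k : ℝ) - 1)) ≤ (Fintype.card F : ℝ) ∧
    (1 / 2 : ℝ) *
        ((n : ℝ) / ((2 * (k : ℝ) - 1) * ((k : ℝ) - 1))) ^
          ((2 * (k : ℝ) - 1) / ((k : ℝ) - 1)) ≤ (Fintype.card F : ℝ) := by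
  classical
  obtain ⟨P, hPcard, hPdeg⟩ := exists_finset_nonconstant_natDegree_lt F k
  have hcount := card_mul_choose_le_of_lcs_lt (m := 2 * k - 1) (d := k - 1) hα
    (fun f hf => ⟨(hPdeg f hf).1, Nat.le_sub_one_of_lt (hPdeg f hf).2⟩)
    fun f hf g hg hfg u hfu hgu => by
      have := hcorr f g (hPdeg f hf).2 (hPdeg g hg).2 hfg u hfu hgu
      omega
  have hreal := div_rpow_le_two_mul_rpow_of_pow_le hk
    (pow_le_two_mul_pow_mul_of_card_mul_choose_le hk Fintype.one_lt_card
      ((Nat.mul_le_mul_right _ hPcard).trans hcount))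
  have hkR : (2 : ℝ) ≤ k := by exact_mod_cast hk
  have hX : 0 ≤ (n : ℝ) / ((2 * (k : ℝ) - 1) * ((k : ℝ) - 1)) := by
    have : 0 < (2 * (k : ℝ) - 1) * ((k : ℝ) - 1) := by nlinarith
    positivity
  have hbound := Real.one_div_rpow_mul_rpow_div_le hX (by positivity) two_pos (by linarith) hreal
  refine ⟨hbound, le_trans (mul_le_mul_of_nonneg_right ?_ (Real.rpow_nonneg hX _)) hbound⟩
  simpa using Real.rpow_le_rpow_of_exponent_ge (x := 1 / 2) (by norm_num) (by norm_num)
    (show 1 / ((k : ℝ) - 1) ≤ 1 by rw [div_le_one (by linarith)]; linarith)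
end
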